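/- arXiv:1410.4532 — 12 statements merged into one kernel-verified Lean document; each statement's English description precedes it below -/
import Mathlib

section
/- Let (a_i)_{i=1}^n be a sequence of positive integers and let b be a positive integer such that gcd(a_i, b) ≤ g for all 1 ≤ i ≤ n. Then the set of residues modulo b attained by the subset sums {∑_{i∈I} a_i : I ⊆ [n]} has cardinality at least min(b/g, n). -/
/-!
The sets of subset sums of the first `k` terms grow with `k` and contain `0`. If every step
enlarges the set strictly, the last one has at least `n + 1` elements. Otherwise some step leaves
it unchanged, so it is closed under adding that term `a_k` and contains the cyclic subgroup of
`ℤ/b` generated by `a_k`, of order `b / gcd(a_k, b) ≥ b / g`.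
-/

open Finset

theorem addOrderOf_le_card_of_add_mem {G : Type*} [AddMonoid G] {S : Finset G} {c : G}
    (h0 : 0 ∈ S) (hS : ∀ x ∈ S, x + c ∈ S) : addOrderOf c ≤ #S := by
  have hmem : ∀ m : ℕ, m • c ∈ S := by
    intro m
    induction m with
    | zero => simpa using h0
    | succ m ih => simpa [succ_nsmul] using hS _ ih
  exact le_card_of_inj_on_range (· • c) (fun m _ ↦ hmem m) nsmul_injOn_Iio_addOrderOf

section SubsetSums

variable {ι G : Type*} [AddCommMonoid G] [DecidableEq G]

def subsetSums (s : Finset ι) (c : ι → G) : Finset G :=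
  s.powerset.image fun I ↦ ∑ i ∈ I, c i

variable {s : Finset ι} {c : ι → G} {j : ι}

theorem zero_mem_subsetSums : 0 ∈ subsetSums s c :=
  mem_image.2 ⟨∅, empty_mem_powerset s, sum_empty⟩

variable [DecidableEq ι]

theorem subsetSums_subset_insert : subsetSums s c ⊆ subsetSums (insert j s) c :=
  image_subset_image (powerset_mono.2 (subset_insert j s))

theorem add_mem_subsetSums_insert (hj : j ∉ s) {x : G} (hx : x ∈ subsetSums s c) :
    x + c j ∈ subsetSums (insert j s) c := by
  obtain ⟨I, hI, rfl⟩ := mem_image.1 hx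
  have hjI : j ∉ I := fun h ↦ hj (mem_powerset.1 hI h)
  refine mem_image.2
    ⟨insert j I, mem_powerset.2 (insert_subset_insert j (mem_powerset.1 hI)), ?_⟩
  rw [sum_insert hjI, add_comm]

theorem card_add_one_le_or_addOrderOf_le_card_subsetSums (s : Finset ι) (c : ι → G) :
    #s + 1 ≤ #(subsetSums s c) ∨ ∃ i ∈ s, addOrderOf (c i) ≤ #(subsetSums s c) := by
  induction s using Finset.induction_on with
  | empty => simp [subsetSums]
  | @insert j s hj ih =>
    have hsub : subsetSums s c ⊆ subsetSums (insert j s) c := subsetSums_subset_insert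
    by_cases hgrow : subsetSums s c = subsetSums (insert j s) c
    · refine Or.inr ⟨j, mem_insert_self j s, ?_⟩
      rw [← hgrow]
      exact addOrderOf_le_card_of_add_mem zero_mem_subsetSums
        fun x hx ↦ hgrow ▸ add_mem_subsetSums_insert hj hx
    · have hlt := card_lt_card (ssubset_of_subset_of_ne hsub hgrow)
      rcases ih with ih | ⟨i, hi, ih⟩
      · exact Or.inl (by rw [card_insert_of_notMem hj]; omega)
      · exact Or.inr ⟨i, mem_insert_of_mem hi, ih.trans hlt.le⟩

end SubsetSums

theorem div_le_addOrderOf_natCast {b g x : ℕ} (hb : b ≠ 0) (hx : Nat.gcd x b ≤ g) :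
    (b : ℝ) / g ≤ addOrderOf (x : ZMod b) := by
  have hd : 0 < Nat.gcd b x := Nat.gcd_pos_of_pos_left x (Nat.pos_of_ne_zero hb)
  rw [ZMod.addOrderOf_coe x hb, Nat.cast_div (Nat.gcd_dvd_left b x) (by exact_mod_cast hd.ne')]
  gcongr
  rw [Nat.gcd_comm]
  exact_mod_cast hx

theorem subsetSums_natCast_eq_image (n b : ℕ) (a : Fin n → ℕ) :
    subsetSums univ (fun i ↦ (a i : ZMod b)) =
      (univ.powerset.image fun I : Finset (Fin n) ↦ (∑ i ∈ I, a i) % b).image Nat.cast := by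
  simp [subsetSums, image_image, Function.comp_def, ZMod.natCast_mod]

theorem stmt0_general (n : ℕ) (a : Fin n → ℕ) (b g : ℕ) (hb : 0 < b)
    (hgcd : ∀ i, Nat.gcd (a i) b ≤ g) :
    min ((b : ℝ) / g) n ≤
      ((Finset.univ.powerset.image (fun I : Finset (Fin n) => (∑ i ∈ I, a i) % b)).card : ℝ) := by
  have hcast : (#(subsetSums univ fun i ↦ (a i : ZMod b)) : ℝ) ≤
      #(univ.powerset.image fun I : Finset (Fin n) ↦ (∑ i ∈ I, a i) % b) := by
    rw [subsetSums_natCast_eq_image]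
    exact_mod_cast card_image_le
  refine le_trans ?_ hcast
  rcases card_add_one_le_or_addOrderOf_le_card_subsetSums univ fun i ↦ (a i : ZMod b) with
    hgrow | ⟨i, -, hord⟩
  · rw [card_univ, Fintype.card_fin] at hgrow
    exact (min_le_right _ _).trans (by exact_mod_cast (Nat.le_succ n).trans hgrow)
  · exact (min_le_left _ _).trans
      ((div_le_addOrderOf_natCast hb.ne' (hgcd i)).trans (by exact_mod_cast hord))

/-- The set of residues mod `b` attained by subset sums of `a` has size at least
`min (b/g) n`, when each `gcd (a i) b ≤ g`. -/
theorem stmt0 (n : ℕ) (a : Fin n → ℕ) (ha : ∀ i, 0 < a i) (b g : ℕ) (hb : 0 < b)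
    (hg : 0 < g) (hgcd : ∀ i, Nat.gcd (a i) b ≤ g) :
    min ((b : ℝ) / g) n ≤
      ((Finset.univ.powerset.image (fun I : Finset (Fin n) => (∑ i ∈ I, a i) % b)).card : ℝ) :=
  stmt0_general n a b g hb hgcd
end

section
/- Let a, b, k, l be positive integers with gcd(a, b) ≤ g. Then the set {ax + by : 0 ≤ x ≤ k, 0 ≤ y ≤ l} has cardinality at least k · min(a/g, l). -/
/-!
Modulo `a`, the value `a * x + b * y` only remembers `b * y`, and multiplication by `b` is
injective on residues modulo `a / gcd a b`. So for `y` below `a / gcd a b` the value determines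
`y`, and then `x`: the map is injective on a `(k + 1) × min (a / gcd a b) (l + 1)` box.
-/

namespace Nat

theorem injOn_mul_add_mul (a b : ℕ) :
    Set.InjOn (fun p : ℕ × ℕ => a * p.1 + b * p.2) (Set.univ ×ˢ Set.Iio (a / a.gcd b)) := by
  rintro ⟨x₁, y₁⟩ ⟨-, hy₁⟩ ⟨x₂, y₂⟩ ⟨-, hy₂⟩ (h : a * x₁ + b * y₁ = a * x₂ + b * y₂)
  have ha : 0 < a := Nat.pos_of_ne_zero fun ha => by simp [ha] at hy₁
  have hmod : b * y₁ ≡ b * y₂ [MOD a] := by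
    simpa [Nat.ModEq, Nat.mul_add_mod] using congrArg (· % a) h
  have hy : y₁ = y₂ := (hmod.cancel_left_div_gcd ha).eq_of_lt_of_lt hy₁ hy₂
  subst hy
  have hx : x₁ = x₂ := Nat.eq_of_mul_eq_mul_left ha (Nat.add_right_cancel h)
  rw [hx]

theorem mul_min_le_card_image_mul_add_mul (a b k l : ℕ) :
    (k + 1) * min (a / a.gcd b) (l + 1) ≤
      ((Finset.range (k + 1) ×ˢ Finset.range (l + 1)).image
        (fun p => a * p.1 + b * p.2)).card := by
  set box := Finset.range (k + 1) ×ˢ Finset.range (min (a / a.gcd b) (l + 1))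
  have hinj : Set.InjOn (fun p : ℕ × ℕ => a * p.1 + b * p.2) box :=
    (injOn_mul_add_mul a b).mono fun p hp => by
      simp only [box, Finset.coe_product, Finset.coe_range, Set.mem_prod, Set.mem_Iio,
        lt_min_iff] at hp
      exact ⟨trivial, hp.2.1⟩
  have hsub : box ⊆ Finset.range (k + 1) ×ˢ Finset.range (l + 1) :=
    Finset.product_subset_product subset_rfl
      (Finset.range_subset_range.mpr (min_le_right _ _))
  calc (k + 1) * min (a / a.gcd b) (l + 1) = box.card := by simp [box]
    _ = (box.image fun p => a * p.1 + b * p.2).card := (Finset.card_image_of_injOn hinj).symm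
    _ ≤ _ := Finset.card_le_card (Finset.image_subset_image hsub)

theorem cast_div_le_cast_div_of_dvd {a d g : ℕ} (hda : d ∣ a) (hdg : d ≤ g) :
    (a : ℝ) / g ≤ (a / d : ℕ) := by
  obtain ⟨c, rfl⟩ := hda
  rcases d.eq_zero_or_pos with rfl | hd
  · simp
  rw [Nat.mul_div_cancel_left c hd]
  refine div_le_of_le_mul₀ (by positivity) (by positivity) ?_
  rw [Nat.cast_mul, mul_comm (d : ℝ)]
  gcongr

end Nat

theorem stmt2_general (a b k l g : ℕ) (hgcd : Nat.gcd a b ≤ g) :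
    (k : ℝ) * min ((a : ℝ) / g) l ≤
      (((Finset.range (k + 1) ×ˢ Finset.range (l + 1)).image
        (fun p => a * p.1 + b * p.2)).card : ℝ) := by
  have hmin : min ((a : ℝ) / g) l ≤ min (a / a.gcd b : ℕ) (l + 1 : ℕ) := by
    push_cast
    gcongr
    · exact Nat.cast_div_le_cast_div_of_dvd (Nat.gcd_dvd_left a b) hgcd
    · linarith
  calc (k : ℝ) * min ((a : ℝ) / g) l
      ≤ ((k + 1 : ℕ) : ℝ) * min (a / a.gcd b : ℕ) (l + 1 : ℕ) := by
        gcongr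
        linarith
    _ ≤ _ := mod_cast Nat.mul_min_le_card_image_mul_add_mul a b k l

/-- `|S(k∘a, l∘b)| ≥ k · min (a/g) l` when `gcd(a,b) ≤ g`. -/
theorem stmt2 (a b k l g : ℕ) (ha : 0 < a) (hb : 0 < b) (hk : 0 < k) (hl : 0 < l)
    (hg : 0 < g) (hgcd : Nat.gcd a b ≤ g) :
    (k : ℝ) * min ((a : ℝ) / g) l ≤
      (((Finset.range (k + 1) ×ˢ Finset.range (l + 1)).image
        (fun p => a * p.1 + b * p.2)).card : ℝ) :=
  stmt2_general a b k l g hgcd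
end

section
/- There exists a constant c > 0 such that for every finite set A of positive integers and every positive integer b ≥ 2 with max(A) < b^3/16, the product set A·[b] = {a·j : a ∈ A, 1 ≤ j ≤ b} satisfies |A·[b]| ≥ c·|A|·b/log b. -/
/-!
Let `P` be the set of primes in `(√b, b]`. Every element of `A·P` is less than `b⁴`, and the
squares of its prime factors from `P` all exceed `b`, so it has at most seven such factors and
hence at most seven representations `a * p`; thus `|A·[b]| ≥ |A·P| ≥ |A| |P| / 7`. Chebyshev's
lower bound for `π b`, minus the at most `√b` primes up to `√b`, gives `|P| ≫ b / log b` once `b`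
is large; for small `b` the trivial bound `|A·[b]| ≥ |A|` suffices.
-/

open Finset Real

def largePrimes (b : ℕ) : Finset ℕ := (Ioc (Nat.sqrt b) b).filter Nat.Prime

lemma mem_largePrimes {b p : ℕ} : p ∈ largePrimes b ↔ p.Prime ∧ b < p ^ 2 ∧ p ≤ b := by
  simp only [largePrimes, mem_filter, mem_Ioc, Nat.sqrt_lt']
  tauto

lemma largePrimes_subset_Icc (b : ℕ) : largePrimes b ⊆ Icc 1 b := fun p hp ↦ by
  obtain ⟨hp, -, hpb⟩ := mem_largePrimes.1 hp
  exact mem_Icc.2 ⟨hp.one_le, hpb⟩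

lemma primeCounting_le_card_largePrimes_add_sqrt (b : ℕ) :
    Nat.primeCounting b ≤ #(largePrimes b) + Nat.sqrt b := by
  rw [← Nat.primesLE_card_eq_primeCounting, Nat.primesLE_eq_filter_Ioc_zero,
    ← Ioc_union_Ioc_eq_Ioc (Nat.zero_le _) (Nat.sqrt_le_self b), filter_union]
  calc #((Ioc 0 (Nat.sqrt b)).filter Nat.Prime ∪ largePrimes b)
      ≤ #((Ioc 0 (Nat.sqrt b)).filter Nat.Prime) + #(largePrimes b) := card_union_le _ _
    _ ≤ Nat.sqrt b + #(largePrimes b) := by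
        grw [card_filter_le, Nat.card_Ioc, Nat.sub_zero]
    _ = #(largePrimes b) + Nat.sqrt b := add_comm _ _

lemma div_le_card_largePrimes {b : ℕ} (hb : 10000 ≤ b) :
    (b : ℝ) / (8 * log b) ≤ #(largePrimes b) := by
  have hb' : (10000 : ℝ) ≤ b := by exact_mod_cast hb
  have hlog : 0 < log b := log_pos (by linarith)
  -- With `t = b^(1/4)` the losses `log (b + 1)` and `√b log b` are `O(t³)`, against `t⁴ log 2`.
  set t : ℝ := (b : ℝ) ^ (4⁻¹ : ℝ) with ht_def
  have ht4 : t ^ 4 = b := by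
    simpa using rpow_inv_natCast_pow (Nat.cast_nonneg b) (n := 4) (by norm_num)
  have ht : 10 ≤ t := by
    by_contra! h
    have : t ^ 4 < 10 ^ 4 := by gcongr
    linarith
  have hlog_le : log b ≤ 4 * t := by
    have := log_le_rpow_div (Nat.cast_nonneg b) (show (0 : ℝ) < 4⁻¹ by norm_num)
    rwa [← ht_def, div_inv_eq_mul, mul_comm] at this
  have hlog_succ : log (b + 1) ≤ 2 * log b := by
    rw [← log_rpow (by linarith)]
    exact log_le_log (by linarith) (by norm_num; nlinarith)
  have hsqrt : (Nat.sqrt b : ℝ) ≤ t ^ 2 := by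
    have h : ((Nat.sqrt b : ℕ) : ℝ) ^ 2 ≤ (t ^ 2) ^ 2 := by
      rw [← pow_mul, ht4]; exact_mod_cast Nat.sqrt_le' b
    exact le_of_pow_le_pow_left₀ two_ne_zero (by positivity) h
  have hcount : (Nat.primeCounting b : ℝ) ≤ #(largePrimes b) + Nat.sqrt b := by
    exact_mod_cast primeCounting_le_card_largePrimes_add_sqrt b
  have hpi := Chebyshev.pi_ge b
  rw [div_le_iff₀ hlog] at hpi
  have hsqrt_log : (Nat.sqrt b : ℝ) * log b ≤ t ^ 2 * (4 * t) :=
    mul_le_mul hsqrt hlog_le hlog.le (by positivity)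
  have hL : b * log 2 - 2 * log b - t ^ 2 * (4 * t) ≤ #(largePrimes b) * log b := by
    nlinarith [mul_le_mul_of_nonneg_right hcount hlog.le]
  rw [div_le_iff₀ (by positivity)]
  have := log_two_gt_d9
  nlinarith [pow_le_pow_left₀ (by norm_num) ht 3]

lemma pow_card_filter_dvd_le_sq {b m : ℕ} (hm : m ≠ 0) :
    b ^ #((largePrimes b).filter (· ∣ m)) ≤ m ^ 2 := by
  set F := (largePrimes b).filter (· ∣ m)
  have hF : ∀ p ∈ F, p.Prime ∧ b < p ^ 2 ∧ p ∣ m := fun p hp ↦ by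
    obtain ⟨hpL, hpm⟩ := mem_filter.1 hp
    exact ⟨(mem_largePrimes.1 hpL).1, (mem_largePrimes.1 hpL).2.1, hpm⟩
  have hdvd : ∏ p ∈ F, p ∣ m :=
    prod_primes_dvd m (fun p hp ↦ (hF p hp).1.prime) (fun p hp ↦ (hF p hp).2.2)
  calc b ^ #F ≤ ∏ p ∈ F, p ^ 2 := pow_card_le_prod _ _ _ fun p hp ↦ (hF p hp).2.1.le
    _ = (∏ p ∈ F, p) ^ 2 := prod_pow _ _ _
    _ ≤ m ^ 2 := by gcongr; exact Nat.le_of_dvd (Nat.pos_of_ne_zero hm) hdvd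

lemma card_filter_mul_eq_le_card_filter_dvd {A P : Finset ℕ} (hP : 0 ∉ P) (m : ℕ) :
    #((A ×ˢ P).filter (fun x ↦ x.1 * x.2 = m)) ≤ #(P.filter (· ∣ m)) := by
  refine card_le_card_of_injOn Prod.snd (fun x hx ↦ ?_) (fun x hx y hy hxy ↦ ?_)
  · obtain ⟨hxAP, rfl⟩ := mem_filter.1 hx
    exact mem_filter.2 ⟨(mem_product.1 hxAP).2, dvd_mul_left _ _⟩
  · obtain ⟨hx, hxm⟩ := mem_filter.1 hx
    obtain ⟨-, hym⟩ := mem_filter.1 hy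
    have hx0 : x.2 ≠ 0 := fun h ↦ hP (h ▸ (mem_product.1 hx).2)
    refine Prod.ext (Nat.eq_of_mul_eq_mul_right (Nat.pos_of_ne_zero hx0) ?_) hxy
    rw [hxm, hxy, hym]

lemma card_mul_card_largePrimes_le (A : Finset ℕ) {b : ℕ} (hb : 2 ≤ b)
    (hA₀ : ∀ a ∈ A, 0 < a) (hA : ∀ a ∈ A, a < b ^ 3) :
    #A * #(largePrimes b) ≤ 7 * #((A ×ˢ Icc 1 b).image fun x ↦ x.1 * x.2) := by
  have h0 : 0 ∉ largePrimes b := fun h ↦ Nat.not_prime_zero (mem_largePrimes.1 h).1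
  rw [← card_product A (largePrimes b)]
  refine (card_le_mul_card_image (f := fun x : ℕ × ℕ ↦ x.1 * x.2) _ 7 fun m hm ↦ ?_).trans ?_
  · obtain ⟨⟨a, p⟩, hap, rfl⟩ := mem_image.1 hm
    obtain ⟨ha, hp⟩ := mem_product.1 hap
    dsimp only
    have hp' := mem_largePrimes.1 hp
    have hm0 : a * p ≠ 0 := Nat.mul_ne_zero (hA₀ a ha).ne' hp'.1.ne_zero
    have hm4 : a * p < b ^ 4 := by
      calc a * p ≤ a * b := Nat.mul_le_mul_left _ hp'.2.2
        _ < b ^ 3 * b := Nat.mul_lt_mul_of_pos_right (hA a ha) (by omega)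
        _ = b ^ 4 := by ring
    have hpow : b ^ #((largePrimes b).filter (· ∣ a * p)) < b ^ 8 :=
      (pow_card_filter_dvd_le_sq hm0).trans_lt
        (by simpa only [← pow_mul] using Nat.pow_lt_pow_left hm4 two_ne_zero)
    have hdvd_lt := (Nat.pow_lt_pow_iff_right (by omega)).1 hpow
    have hfiber := card_filter_mul_eq_le_card_filter_dvd (A := A) h0 (a * p)
    omega
  · exact Nat.mul_le_mul_left 7 <| card_le_card <|
      image_subset_image (product_subset_product_right (largePrimes_subset_Icc b))

lemma card_le_card_image_mul_Icc (A : Finset ℕ) {b : ℕ} (hb : 1 ≤ b) :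
    #A ≤ #((A ×ˢ Icc 1 b).image fun x ↦ x.1 * x.2) :=
  card_le_card fun a ha ↦
    mem_image.2 ⟨(a, 1), mem_product.2 ⟨ha, mem_Icc.2 ⟨le_rfl, hb⟩⟩, mul_one a⟩

/-- If every element of `A` is less than `b^3/16`, then `|A·[b]| ≫ |A| b / log b`. -/
theorem stmt3 : ∃ c : ℝ, 0 < c ∧ ∀ (A : Finset ℕ) (b : ℕ), A.Nonempty → (∀ a ∈ A, 0 < a) →
    2 ≤ b → (∀ a ∈ A, (a : ℝ) < (b : ℝ) ^ 3 / 16) →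
    c * A.card * b / Real.log b ≤
      (((A ×ˢ Finset.Icc 1 b).image (fun p => p.1 * p.2)).card : ℝ) := by
  refine ⟨min (1 / 56) (log 2 / 10000), by positivity, fun A b _ hA₀ hb hA ↦ ?_⟩
  set c := min (1 / 56 : ℝ) (log 2 / 10000)
  set N := (A ×ˢ Icc 1 b).image fun x ↦ x.1 * x.2
  have hlog : 0 < log b := log_pos (by exact_mod_cast hb)
  rw [div_le_iff₀ hlog]
  rcases lt_or_ge b 10000 with hsmall | hlarge
  · have hcb : c * b ≤ log b := calc
      c * b ≤ log 2 / 10000 * 10000 := by gcongr; exacts [min_le_right _ _, mod_cast hsmall.le]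
      _ = log 2 := by ring
      _ ≤ log b := log_le_log two_pos (by exact_mod_cast hb)
    have hAN : (#A : ℝ) ≤ #N := mod_cast card_le_card_image_mul_Icc A (by omega)
    calc c * #A * b = #A * (c * b) := by ring
      _ ≤ #N * log b := by gcongr
  · have hA' : ∀ a ∈ A, a < b ^ 3 := fun a ha ↦ by
      have : (a : ℝ) < b ^ 3 := (hA a ha).trans_le (by bound)
      exact_mod_cast this
    have hcount : (#A : ℝ) * #(largePrimes b) ≤ 7 * #N :=
      mod_cast card_mul_card_largePrimes_le A hb hA₀ hA'
    have hP := div_le_card_largePrimes hlarge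
    calc c * #A * b ≤ 1 / 56 * #A * b := by gcongr; exact min_le_left _ _
      _ = #A * (b / (8 * log b)) * log b / 7 := by field_simp; ring
      _ ≤ #A * #(largePrimes b) * log b / 7 := by gcongr
      _ ≤ 7 * #N * log b / 7 := by gcongr
      _ = #N * log b := by ring
end

section
/- Let a, b, d, k be positive integers and for 0 ≤ i < k set f_i = gcd(a, b - i·d). Then the product ∏_{i=0}^{k-1} f_i divides a·d^k·∏_{q < k} q^{⌈k/q⌉}, where the product is over all prime powers q less than k. -/
/-!
Fix a prime `p` and let `α = v_p(a)`, `δ = v_p(d)`. Counting `v_p(n)` as the number of `j ≥ 1`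
with `p ^ j ∣ n`, and using `f_i ∣ a`, we get
`v_p(∏ f_i) ≤ ∑_{j ≤ α} #{i < k | p ^ j ∣ b - i d}`.
The indices `i` counted in the `j`-th term are pairwise congruent modulo `p ^ (j - δ)`, so
there are at most `⌈k / p ^ (j - δ)⌉` of them. The terms with `j ≤ δ` give at most
`k δ = v_p(d ^ k)`; each remaining term with `p ^ (j - δ) ≥ k` is at most `1`, and the others
are exactly the terms `⌈k / q⌉` for the powers `q < k` of `p`.
-/

open Finset

theorem card_le_ceil_div_of_modEq {k M : ℕ} (hM : 0 < M) {S : Finset ℕ} (hS : S ⊆ range k)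
    (hmod : ∀ i ∈ S, ∀ j ∈ S, i ≡ j [MOD M]) : #S ≤ ⌈(k : ℝ) / M⌉₊ := by
  have hmaps : Set.MapsTo (· / M) S (range ⌈(k : ℝ) / M⌉₊) := fun i hi => by
    rw [coe_range, Set.mem_Iio, Nat.lt_ceil, lt_div_iff₀ (by exact_mod_cast hM)]
    exact_mod_cast (Nat.div_mul_le_self i M).trans_lt (mem_range.mp (hS hi))
  have hinj : Set.InjOn (· / M) S := fun i hi j hj hij => by
    rw [← Nat.div_add_mod i M, ← Nat.div_add_mod j M, hmod i hi j hj]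
    exact congrArg (M * · + _) hij
  simpa using card_le_card_of_injOn _ hmaps hinj

theorem Nat.Prime.pow_sub_factorization_dvd_of_pow_dvd_mul {p j x d : ℕ} (hp : p.Prime)
    (hd : d ≠ 0) (h : p ^ j ∣ x * d) : p ^ (j - d.factorization p) ∣ x := by
  rcases eq_or_ne x 0 with rfl | hx
  · exact dvd_zero _
  rw [hp.pow_dvd_iff_le_factorization (mul_ne_zero hx hd), Nat.factorization_mul hx hd] at h
  rw [hp.pow_dvd_iff_le_factorization hx]
  simp only [Finsupp.add_apply] at h
  omega

theorem card_pow_dvd_sub_mul_le (b : ℤ) {p d : ℕ} (hp : p.Prime) (hd : d ≠ 0) (k j : ℕ) :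
    #{i ∈ range k | (p : ℤ) ^ j ∣ b - (i : ℕ) * d} ≤
      ⌈(k : ℝ) / (p ^ (j - d.factorization p) : ℕ)⌉₊ := by
  refine card_le_ceil_div_of_modEq (pow_pos hp.pos _) (filter_subset _ _) fun i hi i' hi' => ?_
  rw [mem_filter] at hi hi'
  have hdiff : ((p ^ j : ℕ) : ℤ) ∣ (i' - i : ℤ) * d := by
    push_cast
    rw [show ((i' : ℤ) - i) * d = (b - i * d) - (b - i' * d) by ring]
    exact dvd_sub hi.2 hi'.2
  rw [Int.natCast_dvd, Int.natAbs_mul, Int.natAbs_natCast] at hdiff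
  exact Nat.modEq_iff_dvd.mpr
    (Int.natCast_dvd.mpr (hp.pow_sub_factorization_dvd_of_pow_dvd_mul hd hdiff))

theorem Nat.Prime.factorization_eq_card_pow_succ_dvd {p n B : ℕ} (hp : p.Prime) (hn : n ≠ 0)
    (hB : n.factorization p ≤ B) : n.factorization p = #{j ∈ range B | p ^ (j + 1) ∣ n} := by
  have : {j ∈ range B | p ^ (j + 1) ∣ n} = range (n.factorization p) := by
    ext j
    simp only [mem_filter, mem_range, hp.pow_dvd_iff_le_factorization hn]
    omega
  rw [this, card_range]

theorem sum_ceil_div_pow_sub_le (k p δ α : ℕ) :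
    ∑ j ∈ range α, ⌈(k : ℝ) / (p ^ (j + 1 - δ) : ℕ)⌉₊ ≤
      δ * k + ∑ j ∈ range α, ⌈(k : ℝ) / (p ^ (j + 1) : ℕ)⌉₊ := by
  calc ∑ j ∈ range α, ⌈(k : ℝ) / (p ^ (j + 1 - δ) : ℕ)⌉₊
      ≤ ∑ j ∈ range (δ + α), ⌈(k : ℝ) / (p ^ (j + 1 - δ) : ℕ)⌉₊ :=
        sum_le_sum_of_subset (range_subset_range.mpr (Nat.le_add_left α δ))
    _ = δ * k + ∑ j ∈ range α, ⌈(k : ℝ) / (p ^ (j + 1) : ℕ)⌉₊ := by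
        rw [sum_range_add]
        congr 1
        · rw [sum_congr rfl fun j hj => by rw [Nat.sub_eq_zero_of_le (mem_range.mp hj)]]
          simp
        · exact sum_congr rfl fun j _ => by rw [show δ + j + 1 - δ = j + 1 by omega]

theorem sum_factorization_gcd_sub_mul_le {a d p : ℕ} (b : ℤ) (hp : p.Prime) (ha : a ≠ 0)
    (hd : d ≠ 0) (k : ℕ) :
    ∑ i ∈ range k, (Int.gcd a (b - i * d)).factorization p ≤
      ∑ j ∈ range (a.factorization p),
        ⌈(k : ℝ) / (p ^ (j + 1 - d.factorization p) : ℕ)⌉₊ := by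
  set g : ℕ → ℕ := fun i => Int.gcd a (b - i * d)
  have hga (i : ℕ) : g i ∣ a := Int.natCast_dvd_natCast.mp (Int.gcd_dvd_left _ _)
  have hg0 (i : ℕ) : g i ≠ 0 := ne_zero_of_dvd_ne_zero ha (hga i)
  calc ∑ i ∈ range k, (g i).factorization p
      = ∑ i ∈ range k, #{j ∈ range (a.factorization p) | p ^ (j + 1) ∣ g i} :=
        sum_congr rfl fun i _ => hp.factorization_eq_card_pow_succ_dvd (hg0 i)
          ((Nat.factorization_le_iff_dvd (hg0 i) ha).mpr (hga i) p)
    _ = ∑ j ∈ range (a.factorization p), #{i ∈ range k | p ^ (j + 1) ∣ g i} := by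
        simp only [card_filter]
        exact sum_comm
    _ ≤ ∑ j ∈ range (a.factorization p),
          #{i ∈ range k | (p : ℤ) ^ (j + 1) ∣ b - (i : ℕ) * d} :=
        sum_le_sum fun j _ => card_le_card <| monotone_filter_right _ fun i _ hi => by
          exact_mod_cast (Int.natCast_dvd_natCast.mpr hi).trans (Int.gcd_dvd_right _ _)
    _ ≤ _ := sum_le_sum fun j _ => card_pow_dvd_sub_mul_le b hp hd k (j + 1)

theorem sum_ceil_div_pow_succ_le {p : ℕ} (hp : p.Prime) (k α : ℕ) :
    ∑ j ∈ range α, ⌈(k : ℝ) / (p ^ (j + 1) : ℕ)⌉₊ ≤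
      α + ∑ q ∈ (range k).filter IsPrimePow, ⌈(k : ℝ) / q⌉₊ * q.factorization p := by
  rw [← sum_filter_not_add_sum_filter (range α) (fun j => p ^ (j + 1) < k)]
  gcongr
  · calc ∑ j ∈ range α with ¬p ^ (j + 1) < k, ⌈(k : ℝ) / (p ^ (j + 1) : ℕ)⌉₊
        ≤ ∑ j ∈ range α with ¬p ^ (j + 1) < k, 1 := sum_le_sum fun j hj => by
          have hkq : (k : ℝ) ≤ (p ^ (j + 1) : ℕ) := by
            exact_mod_cast not_lt.mp (mem_filter.mp hj).2
          rw [Nat.ceil_le, Nat.cast_one]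
          exact div_le_one_of_le₀ hkq (by positivity)
      _ ≤ α := by simpa using card_filter_le (range α) _
  · calc ∑ j ∈ range α with p ^ (j + 1) < k, ⌈(k : ℝ) / (p ^ (j + 1) : ℕ)⌉₊
        ≤ ∑ j ∈ range α with p ^ (j + 1) < k,
            ⌈(k : ℝ) / (p ^ (j + 1) : ℕ)⌉₊ * (p ^ (j + 1)).factorization p :=
          sum_le_sum fun j _ => by
            rw [hp.factorization_pow, Finsupp.single_eq_same]
            exact Nat.le_mul_of_pos_right _ j.succ_pos
      _ = ∑ q ∈ {j ∈ range α | p ^ (j + 1) < k}.image (fun j => p ^ (j + 1)),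
            ⌈(k : ℝ) / (q : ℕ)⌉₊ * q.factorization p := by
        rw [sum_image fun _ _ _ _ h => Nat.succ_injective (Nat.pow_right_injective hp.two_le h)]
      _ ≤ _ := sum_le_sum_of_subset fun q hq => by
          obtain ⟨j, hj, rfl⟩ := mem_image.mp hq
          exact mem_filter.mpr ⟨mem_range.mpr (mem_filter.mp hj).2,
            (hp.isPrimePow.pow (Nat.succ_ne_zero j))⟩

theorem stmt5_general (a b d k : ℕ) (ha : 0 < a) (hd : 0 < d) :
    (∏ i ∈ Finset.range k, Int.gcd (a : ℤ) ((b : ℤ) - i * d)) ∣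
      a * d ^ k * ∏ q ∈ (Finset.range k).filter IsPrimePow, q ^ ⌈(k : ℝ) / (q : ℝ)⌉₊ := by
  have hgcd : ∀ i ∈ range k, Int.gcd (a : ℤ) ((b : ℤ) - i * d) ≠ 0 := fun i _ =>
    Int.gcd_ne_zero_left (by exact_mod_cast ha.ne')
  have hpow : ∀ q ∈ (range k).filter IsPrimePow, q ^ ⌈(k : ℝ) / (q : ℝ)⌉₊ ≠ 0 :=
    fun q hq => pow_ne_zero _ (mem_filter.mp hq).2.ne_zero
  have had : a * d ^ k ≠ 0 := mul_ne_zero ha.ne' (pow_ne_zero k hd.ne')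
  have hprod := prod_ne_zero_iff.mpr hpow
  refine (Nat.factorization_prime_le_iff_dvd (prod_ne_zero_iff.mpr hgcd)
    (mul_ne_zero had hprod)).mp fun p hp => ?_
  rw [Nat.factorization_prod hgcd, Nat.factorization_mul had hprod,
    Nat.factorization_mul ha.ne' (pow_ne_zero k hd.ne'), Nat.factorization_prod hpow]
  simp only [Finsupp.coe_finsetSum, Finset.sum_apply, Finsupp.add_apply, Nat.factorization_pow,
    Finsupp.smul_apply, smul_eq_mul]
  calc _ ≤ _ := sum_factorization_gcd_sub_mul_le b hp ha.ne' hd.ne' k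
    _ ≤ _ := sum_ceil_div_pow_sub_le k p _ _
    _ ≤ _ := Nat.add_le_add_left (sum_ceil_div_pow_succ_le hp k _) _
    _ = _ := by ring

/-- `∏_{i<k} gcd(a, b - i d)` divides `a d^k ∏_{q<k prime power} q^{⌈k/q⌉}`. -/
theorem stmt5 (a b d k : ℕ) (ha : 0 < a) (hb : 0 < b) (hd : 0 < d) (hk : 0 < k) :
    (∏ i ∈ Finset.range k, Int.gcd (a : ℤ) ((b : ℤ) - i * d)) ∣
      a * d ^ k * ∏ q ∈ (Finset.range k).filter IsPrimePow, q ^ ⌈(k : ℝ) / (q : ℝ)⌉₊ :=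
  stmt5_general a b d k ha hd
end

section
/- There exists a constant C > 0 such that for all positive integers a, b, d, k: min over 0 ≤ i < k of gcd(a, b - i·d) ≤ C · a^{1/k} · d · k^2. -/
/-!
Write `gᵢ = gcd(a, b - i d)`. Fix a prime `p` and an index `i₀ ≤ k` maximising `v_p(gᵢ)`. For
`i ≠ i₀` the prime power `p ^ v_p(gᵢ)` divides both `b - i d` and `b - i₀ d`, hence `(i - i₀) d`;
multiplying over `i` gives `∏ᵢ p ^ v_p(gᵢ) ∣ a · d ^ k · i₀! (k - i₀)!`, which divides `a d ^ k k!`.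
Hence `∏_{i ≤ k} gᵢ ∣ a d ^ k k!`, and the smallest `gᵢ` is at most
`(a d ^ k k!) ^ (1/(k+1)) ≤ a ^ (1/(k+1)) d (k+1)`.
-/

open Finset Nat

theorem prod_range_erase_natAbs_sub {j k : ℕ} (hjk : j ≤ k) :
    ∏ i ∈ (range (k + 1)).erase j, ((i : ℤ) - j).natAbs = j ! * (k - j)! := by
  induction k, hjk using Nat.le_induction with
  | base =>
    rw [range_add_one, erase_insert notMem_range_self, Nat.sub_self, factorial_zero, mul_one,
      ← prod_range_add_one_eq_factorial, ← prod_range_reflect]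
    refine prod_congr rfl fun i hi => ?_
    have := mem_range.1 hi
    omega
  | succ k hjk ih =>
    have hk : k + 1 ∉ (range (k + 1)).erase j := fun h => notMem_range_self (mem_of_mem_erase h)
    rw [range_add_one, erase_insert_of_ne (by omega), prod_insert hk, ih,
      show k + 1 - j = (k - j) + 1 by omega, factorial_succ]
    have : ((↑(k + 1) : ℤ) - j).natAbs = k - j + 1 := by omega
    rw [this]
    ring

theorem prod_range_erase_natAbs_sub_dvd_factorial {j k : ℕ} (hjk : j ≤ k) :
    ∏ i ∈ (range (k + 1)).erase j, ((i : ℤ) - j).natAbs ∣ k ! := by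
  rw [prod_range_erase_natAbs_sub hjk]
  simpa [Nat.add_sub_cancel' hjk] using factorial_mul_factorial_dvd_factorial_add j (k - j)

theorem prod_pow_dvd_of_dvd_sub_mul {p a d k : ℕ} {b : ℤ} {e : ℕ → ℕ}
    (ha : ∀ i ≤ k, p ^ e i ∣ a) (hb : ∀ i ≤ k, (p : ℤ) ^ e i ∣ b - i * d) :
    ∏ i ∈ range (k + 1), p ^ e i ∣ a * d ^ k * k ! := by
  obtain ⟨j, hj, hmax⟩ := (range (k + 1)).exists_max_image e nonempty_range_add_one
  have hjk : j ≤ k := Nat.lt_succ_iff.1 (mem_range.1 hj)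
  have hdiff : ∀ i ∈ (range (k + 1)).erase j, p ^ e i ∣ ((i : ℤ) - j).natAbs * d := by
    intro i hi
    have hik : i ≤ k := Nat.lt_succ_iff.1 (mem_range.1 (mem_of_mem_erase hi))
    have hpj : (p : ℤ) ^ e i ∣ b - j * d :=
      (pow_dvd_pow _ (hmax i (mem_of_mem_erase hi))).trans (hb j hjk)
    have : (p : ℤ) ^ e i ∣ ((i : ℤ) - j) * d := by
      simpa [sub_mul] using dvd_sub hpj (hb i hik)
    rw [← Int.natAbs_natCast d, ← Int.natAbs_mul]
    exact Int.ofNat_dvd_left.1 (by exact_mod_cast this)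
  calc ∏ i ∈ range (k + 1), p ^ e i
      = p ^ e j * ∏ i ∈ (range (k + 1)).erase j, p ^ e i := (mul_prod_erase _ _ hj).symm
    _ ∣ a * ∏ i ∈ (range (k + 1)).erase j, ((i : ℤ) - j).natAbs * d :=
      mul_dvd_mul (ha j hjk) (prod_dvd_prod_of_dvd _ _ hdiff)
    _ = a * d ^ k * ∏ i ∈ (range (k + 1)).erase j, ((i : ℤ) - j).natAbs := by
      rw [prod_mul_distrib, prod_const, card_erase_of_mem hj, card_range, Nat.add_sub_cancel]
      ring
    _ ∣ a * d ^ k * k ! := mul_dvd_mul_left _ (prod_range_erase_natAbs_sub_dvd_factorial hjk)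

theorem prod_gcd_sub_mul_dvd (a d k : ℕ) (b : ℤ) :
    ∏ i ∈ range (k + 1), Int.gcd a (b - i * d) ∣ a * d ^ k * k ! := by
  rcases Nat.eq_zero_or_pos a with rfl | ha
  · simp
  have hg : ∀ i ∈ range (k + 1), Int.gcd a (b - i * d) ≠ 0 := fun i _ =>
    (Int.gcd_pos_of_ne_zero_left _ (by exact_mod_cast ha.ne')).ne'
  rw [Nat.dvd_iff_prime_pow_dvd_dvd]
  intro p n hp hpn
  refine (pow_dvd_pow p ((hp.pow_dvd_iff_le_factorization (prod_ne_zero_iff.2 hg)).1 hpn)).trans ?_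
  rw [Nat.factorization_prod hg, Finsupp.finsetSum_apply, ← prod_pow_eq_pow_sum]
  refine prod_pow_dvd_of_dvd_sub_mul (b := b) (fun i _ => ?_) (fun i _ => ?_)
  · simpa using (ordProj_dvd _ p).trans (Int.gcd_dvd_natAbs_left a (b - i * d))
  · exact_mod_cast (Int.natCast_dvd_natCast.2 (ordProj_dvd _ p)).trans (Int.gcd_dvd_right _ _)

theorem exists_gcd_sub_mul_pow_le {a : ℕ} (d k : ℕ) (b : ℤ) (ha : 0 < a) (hd : 0 < d) :
    ∃ i ≤ k, Int.gcd a (b - i * d) ^ (k + 1) ≤ a * d ^ k * k ! := by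
  obtain ⟨i, hi, hmin⟩ :=
    (range (k + 1)).exists_min_image (fun i : ℕ => Int.gcd a (b - i * d)) nonempty_range_add_one
  refine ⟨i, Nat.lt_succ_iff.1 (mem_range.1 hi), ?_⟩
  calc Int.gcd a (b - i * d) ^ (k + 1)
      ≤ ∏ j ∈ range (k + 1), Int.gcd a (b - j * d) := by
        simpa using pow_card_le_prod _ _ _ hmin
    _ ≤ a * d ^ k * k ! := Nat.le_of_dvd (by positivity) (prod_gcd_sub_mul_dvd a d k b)

theorem le_rpow_one_div_mul_of_pow_le {x y z : ℝ} {n : ℕ} (hn : n ≠ 0) (hx : 0 ≤ x) (hy : 0 ≤ y)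
    (hz : 0 ≤ z) (h : x ^ n ≤ y * z ^ n) : x ≤ y ^ ((1 : ℝ) / n) * z := by
  rwa [← pow_le_pow_iff_left₀ hx (by positivity) hn, mul_pow, one_div,
    Real.rpow_inv_natCast_pow hy hn]

/-- `min_{0 ≤ i < k} gcd(a, b - i d) ≪ a^{1/k} d k^2`. -/
theorem stmt6 : ∃ C : ℝ, 0 < C ∧ ∀ a b d k : ℕ, 0 < a → 0 < b → 0 < d → 0 < k →
    ∃ i < k, (Int.gcd (a : ℤ) ((b : ℤ) - i * d) : ℝ) ≤
      C * (a : ℝ) ^ ((1 : ℝ) / k) * d * k ^ 2 := by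
  refine ⟨1, one_pos, fun a b d k ha _ hd hk => ?_⟩
  obtain ⟨k, rfl⟩ : ∃ k', k = k' + 1 := ⟨k - 1, by omega⟩
  obtain ⟨i, hik, hi⟩ := exists_gcd_sub_mul_pow_le d k b ha hd
  refine ⟨i, Nat.lt_succ_of_le hik, ?_⟩
  set g := Int.gcd (a : ℤ) ((b : ℤ) - i * d)
  have hnat : g ^ (k + 1) ≤ a * (d * (k + 1)) ^ (k + 1) := by
    calc g ^ (k + 1) ≤ a * (d ^ k * k !) := by rwa [← mul_assoc]
      _ ≤ a * (d ^ (k + 1) * (k + 1) ^ (k + 1)) := by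
        gcongr
        · exact k.le_succ
        · exact (factorial_le k.le_succ).trans (factorial_le_pow _)
      _ = a * (d * (k + 1)) ^ (k + 1) := by rw [mul_pow]
  have hk : (1 : ℝ) ≤ ↑(k + 1) := by exact_mod_cast k.succ_pos
  calc (g : ℝ) ≤ (a : ℝ) ^ ((1 : ℝ) / ↑(k + 1)) * (d * ↑(k + 1)) :=
        le_rpow_one_div_mul_of_pow_le k.succ_ne_zero (by positivity) (by positivity)
          (by positivity) (by exact_mod_cast hnat)
    _ ≤ 1 * (a : ℝ) ^ ((1 : ℝ) / ↑(k + 1)) * d * ↑(k + 1) ^ 2 := by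
      rw [one_mul, sq, ← mul_assoc]
      gcongr
      exact le_mul_of_one_le_left (by positivity) hk
end

section
/- There exists a constant C > 0 such that for all positive integers a, b, d, k with a ≠ b: min over 0 ≤ i < k of gcd(a - i·d, b - i·d) ≤ C · |a - b|^{1/k} · d · k^2. -/
open Finset

/-! Put `e = gcd(b, d)`, `b = e b'`, `d = e d'`. Then `gcd(a - i d, b - i d)` divides `e x_i` with
`x_i = gcd(a - b, b' - i d')`. Every `x_i` divides `n = |a - b|`, and since `b' - i d'` is coprime
to `d'`, `gcd(x_i, x_j)` divides `j - i`. So for a prime power `p^m` the indices `i < k` with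
`p^m ∣ x_i` are pairwise congruent mod `p^m`: there are at most `k / p^m + 1` of them, and none
unless `p^m ∣ n`. Summing over `m` as in Legendre's formula gives `∏_{i<k} x_i ∣ n k!`, so the
smallest `x_i` is at most `(n k^k)^{1/k} = n^{1/k} k`. -/

theorem Finset.card_le_div_add_one_of_modEq {s : Finset ℕ} {k q : ℕ} (hs : s ⊆ range k)
    (hmod : ∀ i ∈ s, ∀ j ∈ s, i ≡ j [MOD q]) : #s ≤ k / q + 1 := by
  calc #s ≤ #(range (k / q + 1)) := by
        refine card_le_card_of_injOn (· / q) (fun i hi => ?_) (fun i hi j hj hij => ?_)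
        · simpa [Nat.lt_succ_iff] using Nat.div_le_div_right (mem_range.1 (hs hi)).le
        · have hdiv : i / q = j / q := hij
          rw [← Nat.div_add_mod i q, ← Nat.div_add_mod j q, hdiv,
            (hmod i hi j hj : i % q = j % q)]
    _ = k / q + 1 := card_range _

section PairwiseGcdDvdSub

variable {x : ℕ → ℕ} {n : ℕ}

theorem card_filter_dvd_le (hdvd : ∀ i, x i ∣ n) (hmod : ∀ i j, i ≡ j [MOD (x i).gcd (x j)])
    (k q : ℕ) : #{i ∈ range k | q ∣ x i} ≤ k / q + if q ∣ n then 1 else 0 := by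
  split_ifs with hqn
  · exact card_le_div_add_one_of_modEq (filter_subset _ _) fun i hi j hj =>
      (hmod i j).of_dvd (Nat.dvd_gcd (mem_filter.1 hi).2 (mem_filter.1 hj).2)
  · rw [filter_false_of_mem fun i _ hqi => hqn (hqi.trans (hdvd i)), card_empty]
    exact Nat.zero_le _

theorem prod_range_dvd_mul_factorial (hn : n ≠ 0) (hdvd : ∀ i, x i ∣ n)
    (hmod : ∀ i j, i ≡ j [MOD (x i).gcd (x j)]) (k : ℕ) :
    ∏ i ∈ range k, x i ∣ n * k.factorial := by
  have hx : ∀ i, x i ≠ 0 := fun i hi => hn (Nat.eq_zero_of_zero_dvd (hi ▸ hdvd i))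
  rw [← Nat.factorization_prime_le_iff_dvd (prod_ne_zero_iff.2 fun i _ => hx i)
    (mul_ne_zero hn k.factorial_ne_zero)]
  intro p hp
  -- `B` exceeds `log p` of `n`, of every `x i` and of `k`, so all `p`-adic counts run
  -- over `[1, B)`.
  set B := n + k + 1
  have hltB : ∀ y ≤ n, y < p ^ B := fun y hy => by
    have := Nat.lt_pow_self (n := B) hp.one_lt
    omega
  rw [Nat.factorization_prod fun i _ => hx i, sum_apply',
    Nat.factorization_mul hn k.factorial_ne_zero, Finsupp.add_apply,
    Nat.factorization_eq_card_pow_dvd_of_lt hp (Nat.pos_of_ne_zero hn) (hltB n le_rfl),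
    Nat.factorization_factorial hp (((Nat.log_le_self p k).trans_lt (by omega)) : Nat.log p k < B)]
  calc ∑ i ∈ range k, (x i).factorization p
      = ∑ i ∈ range k, #{m ∈ Ico 1 B | p ^ m ∣ x i} :=
        sum_congr rfl fun i _ => Nat.factorization_eq_card_pow_dvd_of_lt hp
          (Nat.pos_of_ne_zero (hx i)) (hltB _ (Nat.le_of_dvd (Nat.pos_of_ne_zero hn) (hdvd i)))
    _ = ∑ m ∈ Ico 1 B, #{i ∈ range k | p ^ m ∣ x i} :=
        sum_card_bipartiteAbove_eq_sum_card_bipartiteBelow fun i m => p ^ m ∣ x i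
    _ ≤ ∑ m ∈ Ico 1 B, (k / p ^ m + if p ^ m ∣ n then 1 else 0) :=
        sum_le_sum fun m _ => card_filter_dvd_le hdvd hmod k _
    _ = #{m ∈ Ico 1 B | p ^ m ∣ n} + ∑ m ∈ Ico 1 B, k / p ^ m := by
        rw [sum_add_distrib, card_filter, add_comm]

theorem exists_le_rpow_mul_of_modEq_gcd (hn : n ≠ 0) (hdvd : ∀ i, x i ∣ n)
    (hmod : ∀ i j, i ≡ j [MOD (x i).gcd (x j)]) {k : ℕ} (hk : k ≠ 0) :
    ∃ i < k, (x i : ℝ) ≤ (n : ℝ) ^ (1 / k : ℝ) * k := by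
  obtain ⟨i, hi, hmin⟩ := exists_min_image (range k) x (nonempty_range_iff.2 hk)
  refine ⟨i, mem_range.1 hi, ?_⟩
  have hpow : x i ^ k ≤ n * k ^ k :=
    calc x i ^ k = x i ^ #(range k) := by rw [card_range]
      _ ≤ ∏ j ∈ range k, x j := pow_card_le_prod _ _ _ hmin
      _ ≤ n * k.factorial :=
        Nat.le_of_dvd (by positivity) (prod_range_dvd_mul_factorial hn hdvd hmod k)
      _ ≤ n * k ^ k := Nat.mul_le_mul_left _ k.factorial_le_pow
  have hk' : (0 : ℝ) < k := by positivity
  calc (x i : ℝ) ≤ ((n : ℝ) * (k : ℝ) ^ k) ^ (1 / k : ℝ) := by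
        rw [one_div, Real.le_rpow_inv_iff_of_pos (by positivity) (by positivity) hk',
          Real.rpow_natCast]
        exact_mod_cast hpow
    _ = (n : ℝ) ^ (1 / k : ℝ) * k := by
        rw [Real.mul_rpow (by positivity) (by positivity), one_div,
          Real.pow_rpow_inv_natCast (by positivity) hk]

end PairwiseGcdDvdSub

theorem Int.modEq_gcd_gcd_sub_mul {u v : ℤ} (huv : IsCoprime u v) (n : ℤ) (i j : ℕ) :
    i ≡ j [MOD (n.gcd (u - i * v)).gcd (n.gcd (u - j * v))] := by
  set G := (n.gcd (u - i * v)).gcd (n.gcd (u - j * v))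
  have hGi : (G : ℤ) ∣ u - i * v :=
    (Int.natCast_dvd_natCast.2 (Nat.gcd_dvd_left _ _)).trans (Int.gcd_dvd_right _ _)
  have hGj : (G : ℤ) ∣ u - j * v :=
    (Int.natCast_dvd_natCast.2 (Nat.gcd_dvd_right _ _)).trans (Int.gcd_dvd_right _ _)
  have hcop : IsCoprime (G : ℤ) v :=
    IsCoprime.of_isCoprime_of_dvd_left (IsCoprime.sub_mul_right_left_iff.2 huv) hGi
  rw [Nat.modEq_iff_dvd]
  refine hcop.dvd_of_dvd_mul_right ?_
  convert dvd_sub hGi hGj using 1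
  ring

theorem Int.gcd_sub_mul_dvd (a b d i : ℤ) :
    (a - i * d).gcd (b - i * d) ∣ b.gcd d * (a - b).gcd (b / b.gcd d - i * (d / b.gcd d)) := by
  set e : ℤ := (b.gcd d : ℤ)
  have hfactor : e * (b / e - i * (d / e)) = b - i * d := by
    rw [mul_sub, Int.mul_ediv_cancel' (Int.gcd_dvd_left _ _), mul_left_comm,
      Int.mul_ediv_cancel' (Int.gcd_dvd_right _ _)]
  rw [← Int.natAbs_natCast (b.gcd d), ← Int.gcd_mul_left, hfactor]
  have hsub : ((a - i * d).gcd (b - i * d) : ℤ) ∣ a - b := by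
    simpa using dvd_sub (Int.gcd_dvd_left (a - i * d) (b - i * d)) (Int.gcd_dvd_right _ _)
  exact Int.dvd_gcd (hsub.trans (dvd_mul_left _ _)) (Int.gcd_dvd_right _ _)

/-- For `a ≠ b`, `min_{0 ≤ i < k} gcd(a - i d, b - i d) ≪ |a - b|^{1/k} d k^2`. -/
theorem stmt7 : ∃ C : ℝ, 0 < C ∧ ∀ a b d k : ℕ, 0 < a → 0 < b → 0 < d → 0 < k → a ≠ b →
    ∃ i < k, (Int.gcd ((a : ℤ) - i * d) ((b : ℤ) - i * d) : ℝ) ≤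
      C * (((a : ℤ) - b).natAbs : ℝ) ^ ((1 : ℝ) / k) * d * k ^ 2 := by
  refine ⟨1, one_pos, fun a b d k _ _ hd hk hab => ?_⟩
  set e := Int.gcd b d
  have he : 0 < e := Int.gcd_pos_of_ne_zero_right _ (by omega)
  have hcop : IsCoprime ((b : ℤ) / e) (d / e) :=
    Int.isCoprime_iff_gcd_eq_one.2 (Int.gcd_div_gcd_div_gcd he)
  have hn : ((a : ℤ) - b).natAbs ≠ 0 := by omega
  obtain ⟨i, hik, hxi⟩ := exists_le_rpow_mul_of_modEq_gcd hn
    (fun i => Int.gcd_dvd_natAbs_left _ _) (Int.modEq_gcd_gcd_sub_mul hcop _) hk.ne'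
  refine ⟨i, hik, ?_⟩
  have hgcd : Int.gcd ((a : ℤ) - i * d) ((b : ℤ) - i * d)
      ≤ d * ((a : ℤ) - b).gcd ((b : ℤ) / e - i * (d / e)) :=
    (Nat.le_of_dvd (Nat.mul_pos he (Int.gcd_pos_of_ne_zero_left _ (by omega)))
      (Int.gcd_sub_mul_dvd a b d i)).trans
      (Nat.mul_le_mul_right _ (Nat.le_of_dvd hd (Int.gcd_dvd_natAbs_right _ _)))
  set root : ℝ := (((a : ℤ) - b).natAbs : ℝ) ^ ((1 : ℝ) / k)
  calc (Int.gcd ((a : ℤ) - i * d) ((b : ℤ) - i * d) : ℝ)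
      ≤ d * ((a : ℤ) - b).gcd ((b : ℤ) / e - i * (d / e)) := by exact_mod_cast hgcd
    _ ≤ d * (root * k) := by gcongr
    _ ≤ d * (root * k ^ 2) := by
        gcongr
        exact le_self_pow₀ (by exact_mod_cast hk) two_ne_zero
    _ = 1 * root * d * k ^ 2 := by ring
end

section
/- The product over prime powers q < k of q^{⌈k/q⌉} is at most k^{C·k} for some absolute constant C (in fact it equals k^{k + o(k)}, so is O(k^{2k}) for large k). -/
/-!
Take logarithms. Since `⌈k/q⌉ ≤ k/q + 1` and there are fewer than `k` prime powers below `k`,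
it suffices to show `∑_{q < k} log q / q ≤ 4 log k` over prime powers `q`. For primes this is the
Chebyshev–Mertens bound obtained from Legendre's formula:
`k ∑ log p / p ≤ ∑ (⌊k/p⌋ + 1) log p ≤ log k! + k log k ≤ 2 k log k`.
The proper powers `p ^ j` (`j ≥ 2`) contribute at most `log k · ∑_{m, j ≥ 2} m⁻ʲ ≤ 2 log k`.
-/

open Finset Real
open scoped Nat

lemma log_natCast_le_log_natCast {m n : ℕ} (h : m ≤ n) : log m ≤ log n := by
  rcases m.eq_zero_or_pos with rfl | hm
  · simpa using log_natCast_nonneg n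
  · exact log_le_log (by exact_mod_cast hm) (by exact_mod_cast h)

lemma sum_log_le_mul_log {k : ℕ} {s : Finset ℕ} (hs : s ⊆ range k) :
    ∑ q ∈ s, log q ≤ k * log k :=
  calc ∑ q ∈ s, log q ≤ ∑ _q ∈ s, log k :=
        sum_le_sum fun q hq => log_natCast_le_log_natCast (mem_range.1 (hs hq)).le
    _ = #s * log k := by rw [sum_const, nsmul_eq_mul]
    _ ≤ k * log k := by
        gcongr
        simpa using card_le_card hs

lemma Nat.div_le_factorization_factorial {p : ℕ} (hp : p.Prime) (k : ℕ) :
    k / p ≤ (k)!.factorization p :=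
  calc k / p ≤ (p * (k / p))!.factorization p := by
        rw [Nat.factorization_factorial_mul hp]
        exact Nat.le_add_left _ _
    _ ≤ (k)!.factorization p :=
        (Nat.factorization_le_iff_dvd (Nat.factorial_ne_zero _) (Nat.factorial_ne_zero _)).2
          (Nat.factorial_dvd_factorial (Nat.mul_div_le k p)) p

lemma sum_factorization_mul_log_le_log (n : ℕ) (s : Finset ℕ) :
    ∑ p ∈ s, (n.factorization p : ℝ) * log p ≤ log n := by
  rw [log_nat_eq_sum_factorization, Finsupp.sum]
  calc ∑ p ∈ s, (n.factorization p : ℝ) * log p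
      ≤ ∑ p ∈ s ∪ n.factorization.support, (n.factorization p : ℝ) * log p :=
        sum_le_sum_of_subset_of_nonneg subset_union_left fun p _ _ => by positivity
    _ = _ := (sum_subset subset_union_right fun p _ hp => by
        simp [Finsupp.notMem_support_iff.1 hp]).symm

lemma log_factorial_le (k : ℕ) : log (k ! : ℕ) ≤ k * log k := by
  rw [← log_pow, ← Nat.cast_pow]
  exact log_natCast_le_log_natCast (Nat.factorial_le_pow k)

lemma mul_log_div_le (k p : ℕ) : k * (log p / p) ≤ (k / p : ℕ) * log p + log p := by
  have hfloor : (k : ℝ) / p ≤ (k / p : ℕ) + 1 := by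
    rw [← Nat.floor_div_eq_div (K := ℝ)]
    exact (Nat.lt_floor_add_one _).le
  calc (k : ℝ) * (log p / p) = (k / p) * log p := by ring
    _ ≤ ((k / p : ℕ) + 1) * log p := by gcongr
    _ = (k / p : ℕ) * log p + log p := by ring

theorem sum_log_div_prime_le (k : ℕ) :
    ∑ p ∈ (range k).filter Nat.Prime, log p / p ≤ 2 * log k := by
  rcases k.eq_zero_or_pos with rfl | hk
  · simp
  set P := (range k).filter Nat.Prime
  refine le_of_mul_le_mul_left ?_ (by exact_mod_cast hk : (0 : ℝ) < k)
  have hlegendre : ∑ p ∈ P, ((k / p : ℕ) : ℝ) * log p ≤ log (k ! : ℕ) :=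
    calc ∑ p ∈ P, ((k / p : ℕ) : ℝ) * log p ≤ ∑ p ∈ P, ((k)!.factorization p : ℝ) * log p := by
          gcongr with p hp
          exact Nat.div_le_factorization_factorial (mem_filter.1 hp).2 k
      _ ≤ log (k ! : ℕ) := sum_factorization_mul_log_le_log _ _
  calc (k : ℝ) * ∑ p ∈ P, log p / p ≤ ∑ p ∈ P, (((k / p : ℕ) : ℝ) * log p + log p) := by
        rw [mul_sum]
        exact sum_le_sum fun p _ => mul_log_div_le k p
    _ = ∑ p ∈ P, ((k / p : ℕ) : ℝ) * log p + ∑ p ∈ P, log p := sum_add_distrib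
    _ ≤ k * log k + k * log k :=
        add_le_add (hlegendre.trans (log_factorial_le k)) (sum_log_le_mul_log (filter_subset _ _))
    _ = k * (2 * log k) := by ring

lemma sum_Ioo_one_pow_le {x : ℝ} (hx₀ : 0 ≤ x) (hx : x ≤ 1 / 2) (n : ℕ) :
    ∑ j ∈ Ioo 1 n, x ^ j ≤ 2 * x ^ 2 :=
  calc ∑ j ∈ Ioo 1 n, x ^ j ≤ x ^ 2 / (1 - x) := by
        rw [← Finset.Ico_add_one_left_eq_Ioo]
        exact geom_sum_Ico_le_of_lt_one hx₀ (by linarith)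
    _ ≤ 2 * x ^ 2 := by
        rw [div_le_iff₀ (by linarith)]
        nlinarith [sq_nonneg x]

lemma sum_inv_pow_le_two (n : ℕ) : ∑ x ∈ Ioo 1 n ×ˢ Ioo 1 n, ((x.1 : ℝ) ^ x.2)⁻¹ ≤ 2 := by
  rw [sum_product]
  calc ∑ m ∈ Ioo 1 n, ∑ j ∈ Ioo 1 n, ((m : ℝ) ^ j)⁻¹ ≤ ∑ m ∈ Ioo 1 n, 2 * ((m : ℝ) ^ 2)⁻¹ := by
        refine sum_le_sum fun m hm => ?_
        have hm : (2 : ℝ) ≤ m := by exact_mod_cast (mem_Ioo.1 hm).1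
        simp_rw [← inv_pow]
        exact sum_Ioo_one_pow_le (by positivity) (inv_le_of_inv_le₀ (by norm_num) (by linarith)) n
    _ = 2 * ∑ m ∈ Ioo 1 n, ((m : ℝ) ^ 2)⁻¹ := (mul_sum _ _ _).symm
    _ ≤ 2 * (2 / (1 + 1)) := by gcongr; exact_mod_cast sum_Ioo_inv_sq_le 1 n
    _ = 2 := by norm_num

lemma sum_inv_primePow_not_prime_le (k : ℕ) :
    ∑ q ∈ (range k).filter (fun q => IsPrimePow q ∧ ¬ q.Prime), (q : ℝ)⁻¹ ≤ 2 := by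
  have hsub : (range k).filter (fun q => IsPrimePow q ∧ ¬ q.Prime) ⊆
      (Ioo 1 k ×ˢ Ioo 1 k).image fun x : ℕ × ℕ => x.1 ^ x.2 := by
    intro q hq
    obtain ⟨hqk, hpp, hnp⟩ := mem_filter.1 hq
    obtain ⟨p, j, hp, hj, rfl⟩ := (isPrimePow_nat_iff _).1 hpp
    have hj : 1 < j := lt_of_le_of_ne hj (by rintro rfl; exact hnp (by simpa using hp))
    have hqk : p ^ j < k := mem_range.1 hqk
    refine mem_image.2 ⟨(p, j), mem_product.2 ⟨mem_Ioo.2 ⟨hp.one_lt, ?_⟩, mem_Ioo.2 ⟨hj, ?_⟩⟩, rfl⟩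
    · exact (Nat.le_self_pow (by omega) p).trans_lt hqk
    · exact Nat.lt_two_pow_self.trans_le ((Nat.pow_le_pow_left hp.two_le j).trans_lt hqk).le
  calc ∑ q ∈ (range k).filter (fun q => IsPrimePow q ∧ ¬ q.Prime), (q : ℝ)⁻¹
      ≤ ∑ q ∈ (Ioo 1 k ×ˢ Ioo 1 k).image (fun x : ℕ × ℕ => x.1 ^ x.2), (q : ℝ)⁻¹ :=
        sum_le_sum_of_subset_of_nonneg hsub fun _ _ _ => by positivity
    _ ≤ ∑ x ∈ Ioo 1 k ×ˢ Ioo 1 k, ((x.1 ^ x.2 : ℕ) : ℝ)⁻¹ :=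
        sum_image_le_of_nonneg fun _ _ => by positivity
    _ ≤ 2 := by push_cast; exact sum_inv_pow_le_two k

lemma sum_log_div_primePow_le (k : ℕ) :
    ∑ q ∈ (range k).filter IsPrimePow, log q / q ≤ 4 * log k := by
  rw [← sum_filter_add_sum_filter_not _ Nat.Prime, filter_filter, filter_filter]
  have hprime : (range k).filter (fun q => IsPrimePow q ∧ q.Prime) = (range k).filter Nat.Prime :=
    filter_congr fun q _ => and_iff_right_of_imp Nat.Prime.isPrimePow
  set N := (range k).filter (fun q => IsPrimePow q ∧ ¬ q.Prime)
  have hnotprime : ∑ q ∈ N, log q / q ≤ 2 * log k :=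
    calc ∑ q ∈ N, log q / q ≤ ∑ q ∈ N, log k * (q : ℝ)⁻¹ := by
          refine sum_le_sum fun q hq => ?_
          rw [div_eq_mul_inv]
          exact mul_le_mul_of_nonneg_right
            (log_natCast_le_log_natCast (mem_range.1 (mem_filter.1 hq).1).le) (by positivity)
      _ = log k * ∑ q ∈ N, (q : ℝ)⁻¹ := (mul_sum _ _ _).symm
      _ ≤ log k * 2 := by
          gcongr
          exact sum_inv_primePow_not_prime_le k
      _ = 2 * log k := mul_comm _ _
  rw [hprime]
  linarith [sum_log_div_prime_le k]

lemma ceil_div_mul_log_le (k q : ℕ) :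
    (⌈(k : ℝ) / q⌉₊ : ℝ) * log q ≤ k * (log q / q) + log q :=
  calc (⌈(k : ℝ) / q⌉₊ : ℝ) * log q ≤ ((k : ℝ) / q + 1) * log q := by
        gcongr
        exact (Nat.ceil_lt_add_one (by positivity)).le
    _ = k * (log q / q) + log q := by ring

lemma sum_ceil_div_mul_log_le (k : ℕ) :
    ∑ q ∈ (range k).filter IsPrimePow, (⌈(k : ℝ) / q⌉₊ : ℝ) * log q ≤ 5 * k * log k :=
  calc ∑ q ∈ (range k).filter IsPrimePow, (⌈(k : ℝ) / q⌉₊ : ℝ) * log q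
      ≤ ∑ q ∈ (range k).filter IsPrimePow, (k * (log q / q) + log q) :=
        sum_le_sum fun q _ => ceil_div_mul_log_le k q
    _ = k * ∑ q ∈ (range k).filter IsPrimePow, log q / q +
          ∑ q ∈ (range k).filter IsPrimePow, log q := by
        rw [sum_add_distrib, mul_sum]
    _ ≤ k * (4 * log k) + k * log k := by
        gcongr
        · exact sum_log_div_primePow_le k
        · exact sum_log_le_mul_log (filter_subset _ _)
    _ = 5 * k * log k := by ring

/-- `∏_{q < k prime power} q^{⌈k/q⌉} ≤ k^{C k}` for an absolute constant `C`. -/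
theorem stmt9 : ∃ C : ℝ, 0 < C ∧ ∀ k : ℕ, 1 ≤ k →
    (∏ q ∈ (Finset.range k).filter IsPrimePow, (q : ℝ) ^ ⌈(k : ℝ) / (q : ℝ)⌉₊) ≤
      (k : ℝ) ^ (C * k) := by
  refine ⟨5, by norm_num, fun k hk => ?_⟩
  have hk₀ : (0 : ℝ) < k := by exact_mod_cast hk
  have hq : ∀ q ∈ (range k).filter IsPrimePow, (0 : ℝ) < q := fun q hq => by
    exact_mod_cast (mem_filter.1 hq).2.pos
  rw [← log_le_log_iff (prod_pos fun q hq' => pow_pos (hq q hq') _) (rpow_pos_of_pos hk₀ _),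
    log_rpow hk₀, log_prod fun q hq' => (pow_pos (hq q hq') _).ne']
  simpa only [log_pow, mul_assoc] using sum_ceil_div_mul_log_le k
end

section
/- Let a_1, ..., a_n be positive integers with sum m, and let F(r, d) denote the r-uniform hypergraph on [n] whose edges are the r-element subsets I with ∑_{i∈I} a_i = d. If F(r, d) contains l edges, then there exist positive integers r' ≤ r and d' ≤ d such that F(r', d') contains a matching (a family of pairwise disjoint edges) of size at least l^{1/r}/r. -/
/-!
Induction on `r`, with `F = F(r+1, d)` and `l = #F`. If some vertex `i` has degree at least
`l ^ (r/(r+1))` in `F`, removing `i` from the edges through it embeds them into `F(r, d - aᵢ)`,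
and the induction hypothesis applies there. Otherwise every vertex has degree below
`l ^ (r/(r+1))`; a maximal matching `M` of `F` meets every edge, and each of its `(r+1)|M|`
vertices lies in few edges, so `l ≤ |M| (r+1) l ^ (r/(r+1))`, i.e. `|M| ≥ l ^ (1/(r+1)) / (r+1)`.
-/

open Finset

section Hypergraph

variable {α : Type*} [DecidableEq α]

def degree (F : Finset (Finset α)) (v : α) : ℕ := #{E ∈ F | v ∈ E}

theorem exists_maximal_matching (F : Finset (Finset α)) (hF : ∅ ∉ F) :
    ∃ M ⊆ F, (M : Set (Finset α)).Pairwise Disjoint ∧ ∀ E ∈ F, ∃ J ∈ M, ¬Disjoint E J := by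
  classical
  set matchings := F.powerset.filter fun M : Finset (Finset α) =>
    (M : Set (Finset α)).Pairwise Disjoint
  obtain ⟨M, hM, hmax⟩ := exists_max_image matchings card ⟨∅, by simp [matchings]⟩
  rw [mem_filter, mem_powerset] at hM
  refine ⟨M, hM.1, hM.2, fun E hE => ?_⟩
  by_contra! hdisj
  have hEM : E ∉ M := fun hEM => hF ((disjoint_self_iff_empty E).mp (hdisj E hEM) ▸ hE)
  have hins : insert E M ∈ matchings := by
    rw [mem_filter, mem_powerset, coe_insert]
    exact ⟨insert_subset hE hM.1, hM.2.insert_of_symm fun J hJ _ => hdisj J hJ⟩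
  have := hmax _ hins
  rw [card_insert_of_notMem hEM] at this
  omega

theorem card_le_sum_sum_degree {F M : Finset (Finset α)}
    (hmeet : ∀ E ∈ F, ∃ J ∈ M, ¬Disjoint E J) :
    #F ≤ ∑ J ∈ M, ∑ v ∈ J, degree F v := by
  have hcover : F ⊆ M.biUnion fun J => J.biUnion fun v => {E ∈ F | v ∈ E} := by
    intro E hE
    obtain ⟨J, hJ, hEJ⟩ := hmeet E hE
    obtain ⟨v, hvE, hvJ⟩ := not_disjoint_iff.mp hEJ
    simp only [mem_biUnion, mem_filter]
    exact ⟨J, hJ, v, hvJ, hE, hvE⟩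
  calc #F ≤ ∑ J ∈ M, #(J.biUnion fun v => {E ∈ F | v ∈ E}) :=
        (card_le_card hcover).trans card_biUnion_le
    _ ≤ ∑ J ∈ M, ∑ v ∈ J, degree F v := sum_le_sum fun J _ => card_biUnion_le

end Hypergraph

theorem rpow_one_div_div_le_of_le_mul {l m k : ℝ} (hl : 0 ≤ l) (hm : 0 ≤ m) (hk : 0 < k)
    (h : l ≤ m * (k * l ^ (1 - 1 / k))) : l ^ (1 / k) / k ≤ m := by
  rcases hl.eq_or_lt with rfl | hl
  · rw [Real.zero_rpow (by positivity), zero_div]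
    exact hm
  rw [div_le_iff₀ hk]
  refine le_of_mul_le_mul_right ?_ (Real.rpow_pos_of_pos hl (1 - 1 / k))
  calc l ^ (1 / k) * l ^ (1 - 1 / k) = l := by
        rw [← Real.rpow_add hl, add_sub_cancel, Real.rpow_one]
    _ ≤ m * k * l ^ (1 - 1 / k) := by rwa [mul_assoc]

theorem rpow_one_div_succ_div_le {l l' r : ℝ} (hl : 0 ≤ l) (hr : 0 < r)
    (h : l ^ (1 - 1 / (r + 1)) ≤ l') : l ^ (1 / (r + 1)) / (r + 1) ≤ l' ^ (1 / r) / r := by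
  have hroot : l ^ (1 / (r + 1)) = (l ^ (1 - 1 / (r + 1))) ^ (1 / r) := by
    rw [← Real.rpow_mul hl]
    congr 1
    field_simp
    ring
  calc l ^ (1 / (r + 1)) / (r + 1) ≤ l ^ (1 / (r + 1)) / r := by
        gcongr
        linarith
    _ ≤ l' ^ (1 / r) / r := by
        rw [hroot]
        gcongr

section SubsetSums

variable {α : Type*} [Fintype α] (a : α → ℕ)

/-- The paper's hypergraph `F(r, d)`. -/
def subsetSumEdges (r d : ℕ) : Finset (Finset α) := {I | #I = r ∧ ∑ i ∈ I, a i = d}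

variable {a}

theorem mem_subsetSumEdges {r d : ℕ} {I : Finset α} :
    I ∈ subsetSumEdges a r d ↔ #I = r ∧ ∑ i ∈ I, a i = d := by
  simp [subsetSumEdges]

theorem degree_subsetSumEdges_le [DecidableEq α] (r d : ℕ) (i : α) :
    degree (subsetSumEdges a (r + 1) d) i ≤ #(subsetSumEdges a r (d - a i)) := by
  refine card_le_card_of_injOn (fun E => E.erase i) (fun E hE => ?_) (fun E hE E' hE' h => ?_)
  · obtain ⟨hE, hiE⟩ := mem_filter.mp hE
    dsimp only
    obtain ⟨hcard, hsum⟩ := mem_subsetSumEdges.mp hE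
    rw [← add_sum_erase _ _ hiE] at hsum
    rw [mem_coe, mem_subsetSumEdges, card_erase_of_mem hiE, hcard]
    omega
  · rw [← insert_erase (mem_filter.mp hE).2, ← insert_erase (mem_filter.mp hE').2]
    exact congrArg (insert i) h

theorem lt_of_mem_subsetSumEdges [DecidableEq α] (ha : ∀ i, 0 < a i) {r d : ℕ} {E : Finset α}
    (hE : E ∈ subsetSumEdges a (r + 1) d) (hr : 0 < r) {i : α} (hi : i ∈ E) : a i < d := by
  obtain ⟨hcard, hsum⟩ := mem_subsetSumEdges.mp hE
  have hrest : (E.erase i).Nonempty := by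
    rw [← card_pos, card_erase_of_mem hi, hcard]
    omega
  have := sum_pos (fun j _ => ha j) hrest
  rw [← add_sum_erase _ _ hi] at hsum
  omega

theorem pairwise_disjoint_subsetSumEdges_one (d : ℕ) :
    (subsetSumEdges a 1 d : Set (Finset α)).Pairwise Disjoint := by
  intro I hI J hJ hIJ
  obtain ⟨x, rfl⟩ := card_eq_one.mp (mem_subsetSumEdges.mp hI).1
  obtain ⟨y, rfl⟩ := card_eq_one.mp (mem_subsetSumEdges.mp hJ).1
  exact disjoint_singleton.mpr fun h => hIJ (h ▸ rfl)

theorem exists_large_matching_subsetSumEdges [DecidableEq α] (ha : ∀ i, 0 < a i) {r : ℕ}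
    (hr : 0 < r) {d : ℕ} (hd : 0 < d) :
    ∃ r' d', 0 < r' ∧ r' ≤ r ∧ 0 < d' ∧ d' ≤ d ∧ ∃ M ⊆ subsetSumEdges a r' d',
      (M : Set (Finset α)).Pairwise Disjoint ∧
      (#(subsetSumEdges a r d) : ℝ) ^ (1 / (r : ℝ)) / r ≤ #M := by
  induction r, hr using Nat.le_induction generalizing d with
  | base =>
    refine ⟨1, d, one_pos, le_rfl, hd, le_rfl, _, Subset.rfl,
      pairwise_disjoint_subsetSumEdges_one d, by simp⟩
  | succ r hr ih =>
    set F := subsetSumEdges a (r + 1) d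
    set T : ℝ := (#F : ℝ) ^ (1 - 1 / ((r : ℝ) + 1))
    push_cast
    by_cases hhigh : ∃ i, T ≤ degree F i ∧ 0 < degree F i
    · obtain ⟨i, hTi, hi⟩ := hhigh
      obtain ⟨E, hE⟩ := card_pos.mp hi
      have hid := lt_of_mem_subsetSumEdges ha (mem_filter.mp hE).1 hr (mem_filter.mp hE).2
      obtain ⟨r', d', hr', hr'r, hd', hd'd, M, hMsub, hM, hcard⟩ := ih (d := d - a i) (by omega)
      refine ⟨r', d', hr', by omega, hd', by omega, M, hMsub, hM, ?_⟩
      have hlink : T ≤ #(subsetSumEdges a r (d - a i)) :=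
        hTi.trans (by exact_mod_cast degree_subsetSumEdges_le r d i)
      exact (rpow_one_div_succ_div_le (by positivity) (by positivity) hlink).trans hcard
    · have hdeg (v : α) : (degree F v : ℝ) ≤ T := by
        by_contra! h
        have hpos : (0 : ℝ) < degree F v := (Real.rpow_nonneg (by positivity) _).trans_lt h
        exact hhigh ⟨v, h.le, by exact_mod_cast hpos⟩
      obtain ⟨M, hMF, hM, hmeet⟩ := exists_maximal_matching F fun h => by
        simpa using (mem_subsetSumEdges.mp h).1
      refine ⟨r + 1, d, by omega, le_rfl, hd, le_rfl, M, hMF, hM, ?_⟩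
      refine rpow_one_div_div_le_of_le_mul (by positivity) (by positivity) (by positivity) ?_
      calc (#F : ℝ) ≤ ∑ J ∈ M, ∑ v ∈ J, (degree F v : ℝ) := by
            exact_mod_cast card_le_sum_sum_degree hmeet
        _ ≤ ∑ J ∈ M, ∑ v ∈ J, T := by gcongr; exact hdeg _
        _ = #M * ((r + 1) * T) := by
            rw [sum_congr rfl fun J hJ => by rw [sum_const, (mem_subsetSumEdges.mp (hMF hJ)).1],
              sum_const, nsmul_eq_mul, nsmul_eq_mul]
            push_cast
            ring

end SubsetSums

/-- If `F(r,d)` has `l` edges, then some `F(r',d')` with `r' ≤ r`, `d' ≤ d` contains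
a matching of size at least `l^{1/r}/r`. -/
theorem stmt10 (n : ℕ) (a : Fin n → ℕ) (ha : ∀ i, 0 < a i) (r d l : ℕ)
    (hr : 0 < r) (hd : 0 < d)
    (hl : ((Finset.univ : Finset (Finset (Fin n))).filter
      (fun I => I.card = r ∧ ∑ i ∈ I, a i = d)).card = l) :
    ∃ r' d' : ℕ, 0 < r' ∧ r' ≤ r ∧ 0 < d' ∧ d' ≤ d ∧
      ∃ M : Finset (Finset (Fin n)),
        (∀ I ∈ M, I.card = r' ∧ ∑ i ∈ I, a i = d') ∧
        (∀ I ∈ M, ∀ J ∈ M, I ≠ J → Disjoint I J) ∧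
        (l : ℝ) ^ ((1 : ℝ) / r) / r ≤ (M.card : ℝ) := by
  subst hl
  obtain ⟨r', d', hr', hr'r, hd', hd'd, M, hMsub, hM, hcard⟩ :=
    exists_large_matching_subsetSumEdges ha hr hd
  exact ⟨r', d', hr', hr'r, hd', hd'd, M, fun I hI => mem_subsetSumEdges.mp (hMsub hI), hM, hcard⟩
end

section
/- Let a_1, ..., a_n be positive integers with sum m, and fix a positive integer r. Then there exist positive integers r' ≤ r and d' such that the r'-uniform hypergraph F(r', d') (whose edges are the r'-element subsets I of [n] with ∑_{i∈I} a_i = d') contains a matching of size at least n/(r^2 · m^{1/r}). -/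
/-!
Let `ν` be the largest size of a matching in any `F(k, d)` with `0 < k ≤ r`. In a `k`-uniform
hypergraph every edge meets the vertex set of a maximum matching, a set of at most `k ν` vertices,
and deleting a vertex `w` from the edges of `F(k, d)` through it maps them injectively into
`F(k - 1, d - a w)`. Hence `|F(k, d)| ≤ k ν · max_w |F(k - 1, d - a w)|`, so `|F(k, d)| ≤ k! ν^k`.
The `r`-sets have only `m` possible sums, so `C(n, r) ≤ m r! ν^r`, and `n^r ≤ r^r C(n, r)` turns
this into `n^r ≤ m (r² ν)^r`.
-/

open Finset Nat

theorem Nat.pow_le_pow_mul_choose {n r : ℕ} (h : r ≤ n) : n ^ r ≤ r ^ r * n.choose r := by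
  have key : n ^ r * r ! ≤ r ^ r * n.descFactorial r := by
    calc n ^ r * r ! = ∏ i ∈ range r, n * (r - i) := by
          rw [prod_mul_distrib, prod_const, card_range, ← descFactorial_eq_prod_range,
            descFactorial_self]
      _ ≤ ∏ i ∈ range r, r * (n - i) := prod_le_prod' fun i _ => by
          rw [Nat.mul_sub, Nat.mul_sub, Nat.mul_comm n r]
          exact Nat.sub_le_sub_left (Nat.mul_le_mul_right i h) _
      _ = r ^ r * n.descFactorial r := by
          rw [prod_mul_distrib, prod_const, card_range, descFactorial_eq_prod_range]
  rw [descFactorial_eq_factorial_mul_choose, Nat.mul_left_comm, Nat.mul_comm] at key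
  exact Nat.le_of_mul_le_mul_left key r.factorial_pos

namespace Hypergraph

variable {α : Type*}

open Classical in
noncomputable def matchingNumber (H : Finset (Finset α)) : ℕ :=
  (H.powerset.filter fun M : Finset (Finset α) => (M : Set (Finset α)).PairwiseDisjoint id).sup
    card

theorem card_le_matchingNumber {H M : Finset (Finset α)} (hMH : M ⊆ H)
    (hM : (M : Set (Finset α)).PairwiseDisjoint id) : #M ≤ matchingNumber H := by
  classical
  exact le_sup (f := card) (mem_filter.2 ⟨mem_powerset.2 hMH, hM⟩)

theorem exists_card_eq_matchingNumber (H : Finset (Finset α)) :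
    ∃ M ⊆ H, (M : Set (Finset α)).PairwiseDisjoint id ∧ #M = matchingNumber H := by
  classical
  unfold matchingNumber
  have hempty : (∅ : Finset (Finset α)) ∈
      H.powerset.filter fun M : Finset (Finset α) => (M : Set (Finset α)).PairwiseDisjoint id := by
    simp
  obtain ⟨M, hM, hcard⟩ := exists_mem_eq_sup _ ⟨∅, hempty⟩ card
  rw [mem_filter, mem_powerset] at hM
  exact ⟨M, hM.1, hM.2, hcard.symm⟩

theorem matchingNumber_le_card (H : Finset (Finset α)) : matchingNumber H ≤ #H := by
  obtain ⟨M, hMH, -, hcard⟩ := exists_card_eq_matchingNumber H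
  exact hcard ▸ card_le_card hMH

variable [DecidableEq α]

theorem not_disjoint_biUnion_of_card_eq_matchingNumber {H M : Finset (Finset α)} (hMH : M ⊆ H)
    (hM : (M : Set (Finset α)).PairwiseDisjoint id) (hcard : #M = matchingNumber H)
    {I : Finset α} (hI : I ∈ H) (hI₀ : I.Nonempty) : ¬Disjoint I (M.biUnion id) := by
  intro hdisj
  have hIM : I ∉ M := fun hIM =>
    hI₀.ne_empty (disjoint_self.1 (hdisj.mono_right (subset_biUnion_of_mem id hIM)))
  have hmatch : ((insert I M : Finset (Finset α)) : Set (Finset α)).PairwiseDisjoint id := by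
    rw [coe_insert]
    exact hM.insert fun J hJ _ => hdisj.mono_right (subset_biUnion_of_mem id hJ)
  have := card_le_matchingNumber (insert_subset hI hMH) hmatch
  rw [card_insert_of_notMem hIM] at this
  omega

theorem card_le_mul_matchingNumber_mul {H : Finset (Finset α)} {k D : ℕ} (hk : 0 < k)
    (hH : ∀ I ∈ H, #I = k) (hD : ∀ w, #{I ∈ H | w ∈ I} ≤ D) :
    #H ≤ k * matchingNumber H * D := by
  obtain ⟨M, hMH, hM, hcard⟩ := exists_card_eq_matchingNumber H
  set W := M.biUnion id
  have hcover : H ⊆ W.biUnion fun w => {I ∈ H | w ∈ I} := fun I hI => by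
    have hI₀ : I.Nonempty := card_pos.1 (hH I hI ▸ hk)
    obtain ⟨w, hwI, hwW⟩ := not_disjoint_iff.1
      (not_disjoint_biUnion_of_card_eq_matchingNumber hMH hM hcard hI hI₀)
    exact mem_biUnion.2 ⟨w, hwW, mem_filter.2 ⟨hI, hwI⟩⟩
  have hW : #W ≤ #M * k := card_biUnion_le_card_mul M id k fun I hI => (hH I (hMH hI)).le
  calc #H ≤ #W * D := (card_le_card hcover).trans (card_biUnion_le_card_mul W _ D fun w _ => hD w)
    _ ≤ #M * k * D := Nat.mul_le_mul_right D hW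
    _ = k * matchingNumber H * D := by rw [hcard, Nat.mul_comm k]

end Hypergraph

open Hypergraph

namespace SubsetSum

variable {ι : Type*} [Fintype ι] (a : ι → ℕ)

/-- The paper's `F(k, d)`. -/
def sumHypergraph (k d : ℕ) : Finset (Finset ι) :=
  (univ.powersetCard k).filter fun I => ∑ i ∈ I, a i = d

variable {a}

theorem mem_sumHypergraph {k d : ℕ} {I : Finset ι} :
    I ∈ sumHypergraph a k d ↔ #I = k ∧ ∑ i ∈ I, a i = d := by
  simp [sumHypergraph]

theorem card_filter_mem_sumHypergraph_succ_le [DecidableEq ι] (k d : ℕ) (w : ι) :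
    #{I ∈ sumHypergraph a (k + 1) d | w ∈ I} ≤ #(sumHypergraph a k (d - a w)) := by
  refine card_le_card_of_injOn (fun I => I.erase w) (fun I hI => ?_) fun I hI J hJ hIJ => ?_
  · obtain ⟨hIH, hwI⟩ := mem_filter.1 hI
    obtain ⟨hcard, hsum⟩ := mem_sumHypergraph.1 hIH
    refine mem_sumHypergraph.2 ⟨by rw [card_erase_of_mem hwI, hcard]; rfl, ?_⟩
    rw [← hsum, ← add_sum_erase I a hwI, Nat.add_sub_cancel_left]
  · have := congrArg (insert w) hIJ
    rwa [insert_erase (mem_filter.1 hI).2, insert_erase (mem_filter.1 hJ).2] at this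

theorem card_sumHypergraph_le {r ν : ℕ}
    (hν : ∀ k, 0 < k → k ≤ r → ∀ d, matchingNumber (sumHypergraph a k d) ≤ ν) :
    ∀ k ≤ r, ∀ d, #(sumHypergraph a k d) ≤ k ! * ν ^ k := by
  classical
  intro k
  induction k with
  | zero =>
    intro _ d
    exact (card_filter_le _ _).trans (by simp)
  | succ k ih =>
    intro hk d
    have hdeg (w : ι) : #{I ∈ sumHypergraph a (k + 1) d | w ∈ I} ≤ k ! * ν ^ k :=
      (card_filter_mem_sumHypergraph_succ_le k d w).trans (ih (by omega) _)
    calc #(sumHypergraph a (k + 1) d)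
        ≤ (k + 1) * matchingNumber (sumHypergraph a (k + 1) d) * (k ! * ν ^ k) :=
          card_le_mul_matchingNumber_mul k.succ_pos (fun I hI => (mem_sumHypergraph.1 hI).1) hdeg
      _ ≤ (k + 1) * ν * (k ! * ν ^ k) := by gcongr; exact hν _ k.succ_pos hk d
      _ = (k + 1)! * ν ^ (k + 1) := by rw [factorial_succ, pow_succ]; ring

theorem sum_mem_Icc (ha : ∀ i, 0 < a i) {I : Finset ι} (hI : I.Nonempty) :
    ∑ i ∈ I, a i ∈ Icc 1 (∑ i, a i) := by
  obtain ⟨i, hi⟩ := hI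
  exact mem_Icc.2 ⟨(ha i).trans_le (single_le_sum (fun j _ => (a j).zero_le) hi),
    sum_le_sum_of_subset (subset_univ I)⟩

theorem sumHypergraph_eq_empty (ha : ∀ i, 0 < a i) {k d : ℕ} (hk : 0 < k)
    (hd : d ∉ Icc 1 (∑ i, a i)) : sumHypergraph a k d = ∅ :=
  eq_empty_of_forall_notMem fun I hI => by
    obtain ⟨hcard, hsum⟩ := mem_sumHypergraph.1 hI
    exact hd (hsum ▸ sum_mem_Icc ha (card_pos.1 (hcard ▸ hk)))

theorem choose_eq_sum_card_sumHypergraph (ha : ∀ i, 0 < a i) {k : ℕ} (hk : 0 < k) :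
    (Fintype.card ι).choose k = ∑ d ∈ Icc 1 (∑ i, a i), #(sumHypergraph a k d) := by
  rw [← Finset.card_univ, ← card_powersetCard]
  exact card_eq_sum_card_fiberwise fun I hI =>
    sum_mem_Icc ha (card_pos.1 ((mem_powersetCard.1 hI).2 ▸ hk))

theorem pow_le_of_matchingNumber_le (ha : ∀ i, 0 < a i) {r ν : ℕ} (hr : 0 < r)
    (hν : ∀ k, 0 < k → k ≤ r → ∀ d, matchingNumber (sumHypergraph a k d) ≤ ν) :
    Fintype.card ι ^ r ≤ (∑ i, a i) * (r ^ 2 * ν) ^ r := by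
  set N := Fintype.card ι
  set m := ∑ i, a i
  have hchoose (k : ℕ) (hk : 0 < k) (hkr : k ≤ r) : N.choose k ≤ m * (k ! * ν ^ k) := by
    rw [choose_eq_sum_card_sumHypergraph ha hk]
    calc ∑ d ∈ Icc 1 m, #(sumHypergraph a k d) ≤ ∑ d ∈ Icc 1 m, k ! * ν ^ k :=
          sum_le_sum fun d _ => card_sumHypergraph_le hν k hkr d
      _ = m * (k ! * ν ^ k) := by rw [sum_const, Nat.card_Icc, smul_eq_mul, Nat.add_sub_cancel]
  rcases le_or_gt r N with hrN | hNr
  · calc N ^ r ≤ r ^ r * N.choose r := pow_le_pow_mul_choose hrN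
      _ ≤ r ^ r * (m * (r ^ r * ν ^ r)) := by
          gcongr; exact (hchoose r hr le_rfl).trans (by gcongr; exact factorial_le_pow r)
      _ = m * (r ^ 2 * ν) ^ r := by ring
  · rcases N.eq_zero_or_pos with hN | hN
    · simp [hN, hr.ne']
    have hN1 : N ≤ m * ν := by simpa using hchoose 1 one_pos hr
    have hν1 : 1 ≤ ν := Nat.pos_of_ne_zero fun h => by simp [h] at hN1; omega
    calc N ^ r ≤ (r ^ 2 * ν) ^ r := by
          gcongr
          calc N ≤ r := hNr.le
            _ ≤ r ^ 2 * ν := by nlinarith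
      _ ≤ m * (r ^ 2 * ν) ^ r := Nat.le_mul_of_pos_left _ (by nlinarith)

end SubsetSum

theorem div_le_of_pow_le_mul_pow {N m r ν : ℕ} (hr : 0 < r) (hm : 0 < m)
    (h : N ^ r ≤ m * (r ^ 2 * ν) ^ r) :
    (N : ℝ) / ((r : ℝ) ^ 2 * (m : ℝ) ^ ((1 : ℝ) / r)) ≤ ν := by
  rw [div_le_iff₀ (by positivity)]
  have hpow : (N : ℝ) ^ r ≤ ((m : ℝ) ^ ((1 : ℝ) / r) * (r ^ 2 * ν)) ^ r := by
    rw [mul_pow, one_div, Real.rpow_inv_natCast_pow m.cast_nonneg hr.ne']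
    exact_mod_cast h
  calc (N : ℝ) ≤ (m : ℝ) ^ ((1 : ℝ) / r) * (r ^ 2 * ν) :=
        le_of_pow_le_pow_left₀ hr.ne' (by positivity) hpow
    _ = ν * (r ^ 2 * (m : ℝ) ^ ((1 : ℝ) / r)) := by ring

open SubsetSum

/-- Some `F(r',d')` with `r' ≤ r` contains a matching of size at least `n/(r^2 m^{1/r})`,
where `m = ∑ a i`. -/
theorem stmt11 (n : ℕ) (a : Fin n → ℕ) (ha : ∀ i, 0 < a i) (r : ℕ) (hr : 0 < r) :
    ∃ r' d' : ℕ, 0 < r' ∧ r' ≤ r ∧ 0 < d' ∧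
      ∃ M : Finset (Finset (Fin n)),
        (∀ I ∈ M, I.card = r' ∧ ∑ i ∈ I, a i = d') ∧
        (∀ I ∈ M, ∀ J ∈ M, I ≠ J → Disjoint I J) ∧
        (n : ℝ) / ((r : ℝ) ^ 2 * (∑ i, a i : ℕ) ^ ((1 : ℝ) / r)) ≤ (M.card : ℝ) := by
  rcases n.eq_zero_or_pos with rfl | hn
  · exact ⟨r, 1, hr, le_rfl, one_pos, ∅, by simp, by simp, by simp⟩
  set m := ∑ i, a i
  have hm : 0 < m := (mem_Icc.1 (sum_mem_Icc ha (univ_nonempty_iff.2 ⟨⟨0, hn⟩⟩))).1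
  obtain ⟨⟨k, d⟩, hkd, hmax⟩ := exists_max_image (Icc 1 r ×ˢ Icc 1 m)
    (fun p => matchingNumber (sumHypergraph a p.1 p.2))
    ⟨(1, 1), mem_product.2 ⟨mem_Icc.2 ⟨le_rfl, hr⟩, mem_Icc.2 ⟨le_rfl, hm⟩⟩⟩
  obtain ⟨M, hMH, hM, hcard⟩ := exists_card_eq_matchingNumber (sumHypergraph a k d)
  have hν (k' : ℕ) (hk' : 0 < k') (hk'r : k' ≤ r) (d' : ℕ) :
      matchingNumber (sumHypergraph a k' d') ≤ #M := by
    by_cases hd' : d' ∈ Icc 1 m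
    · exact hcard ▸ hmax (k', d') (mem_product.2 ⟨mem_Icc.2 ⟨hk', hk'r⟩, hd'⟩)
    · exact (matchingNumber_le_card _).trans (by simp [sumHypergraph_eq_empty ha hk' hd'])
  obtain ⟨⟨hk, hkr⟩, hd, -⟩ := mem_product.1 hkd |>.imp mem_Icc.1 mem_Icc.1
  refine ⟨k, d, hk, hkr, hd, M, fun I hI => mem_sumHypergraph.1 (hMH hI),
    fun I hI J hJ => hM hI hJ, ?_⟩
  exact div_le_of_pow_le_mul_pow hr hm (by simpa using pow_le_of_matchingNumber_le ha hr hν)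
end

section
/- Let a = (a_i)_{i=1}^n be a sequence of positive integers with ∑_{i=1}^n a_i = m (m sufficiently large). Then there exist positive integers k, r, d and pairwise disjoint r-element subsets I_1, ..., I_k of [n] such that: (1) 1 ≤ r ≤ log m; (2) k·d ≥ m/(log m)^3; and (3) ∑_{i∈I_j} a_i = d for each 1 ≤ j ≤ k. -/
/-!
Group the indices by the dyadic size `⌊log₂ aᵢ⌋` and keep a class `S`, all of whose weights lie
in `[x, 2x)`, carrying at least a `1/(log₂ m + 1)` share of the total weight `m`; take
`r ≈ (2/3) log₂ m`. If `S` is small, `S` itself or one `r`-subset of it is already a heavy enough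
single block. Otherwise, put `L = ⌊m / (r³x)⌋` and suppose that for no `j ≤ r` and `v` there are
more than `L / j` disjoint `j`-subsets of `S` of sum `v`. A maximal disjoint family of such sets
covers at most `L` points and meets every such set, so by induction on `j` at most `L ^ j`
`j`-subsets have any given sum. The `r`-subsets of `S` have fewer than `r x` distinct sums, whence
`C(|S|, r) ≤ r x L ^ r`, which is too small since `r x < 4 ^ r`. So some disjoint family of `k`
blocks of size `j` and sum `v ≥ j x` has `k j > L`, and then `k v > m / r³`.
-/

open Finset

variable {α ι : Type*}

def blocks (S : Finset α) (a : α → ℕ) (j v : ℕ) : Finset (Finset α) :=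
  {A ∈ S.powersetCard j | ∑ i ∈ A, a i = v}

@[simp]
theorem mem_blocks {S A : Finset α} {a : α → ℕ} {j v : ℕ} :
    A ∈ blocks S a j v ↔ (A ⊆ S ∧ #A = j) ∧ ∑ i ∈ A, a i = v := by
  rw [blocks, mem_filter, mem_powersetCard]

theorem blocks_mono {S T : Finset α} (h : S ⊆ T) (a : α → ℕ) (j v : ℕ) :
    blocks S a j v ⊆ blocks T a j v :=
  filter_subset_filter _ (powersetCard_mono h)

theorem Finset.exists_pairwiseDisjoint_subset_maximal [DecidableEq α] (F : Finset (Finset α)) :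
    ∃ 𝒜 ⊆ F, (𝒜 : Set (Finset α)).PairwiseDisjoint id ∧
      ∀ B ∈ F, B.Nonempty → ¬Disjoint B (𝒜.biUnion id) := by
  induction F using Finset.induction_on with
  | empty => exact ⟨∅, subset_refl _, by simp, by simp⟩
  | insert B F _ ih =>
    obtain ⟨𝒜, h𝒜F, h𝒜, hmax⟩ := ih
    by_cases hB : Disjoint B (𝒜.biUnion id)
    · refine ⟨insert B 𝒜, insert_subset_insert B h𝒜F, ?_, fun B' hB' hne hdisj => ?_⟩
      · rw [coe_insert]
        exact h𝒜.insert fun A hA _ => hB.mono_right (subset_biUnion_of_mem id hA)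
      rcases mem_insert.1 hB' with rfl | hB'
      · exact hne.ne_empty (disjoint_self.1
          (hdisj.mono_right (subset_biUnion_of_mem id (mem_insert_self _ _))))
      · exact hmax B' hB' hne
          (hdisj.mono_right (biUnion_subset_biUnion_of_subset_left _ (subset_insert _ _)))
    · exact ⟨𝒜, h𝒜F.trans (subset_insert _ _), h𝒜, fun B' hB' hne =>
        (mem_insert.1 hB').elim (· ▸ hB) (hmax B' · hne)⟩

theorem card_filter_mem_blocks_succ_le [DecidableEq α] (S : Finset α) (a : α → ℕ) (j v : ℕ)
    (i : α) : #{A ∈ blocks S a (j + 1) v | i ∈ A} ≤ #(blocks S a j (v - a i)) := by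
  refine card_le_card_of_injOn (·.erase i) (fun A hA => ?_) (fun A hA B hB h => ?_)
  · simp only [coe_filter, mem_blocks, Set.mem_ofPred_eq, mem_coe] at hA ⊢
    obtain ⟨⟨⟨hAS, hAcard⟩, hAsum⟩, hiA⟩ := hA
    refine ⟨⟨(erase_subset i A).trans hAS, by rw [card_erase_of_mem hiA, hAcard]; rfl⟩, ?_⟩
    rw [← hAsum, ← add_sum_erase A a hiA, Nat.add_sub_cancel_left]
  · simp only [coe_filter, Set.mem_ofPred_eq] at hA hB
    rw [← insert_erase hA.2, ← insert_erase hB.2]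
    exact congrArg (insert i) h

theorem card_blocks_le_pow [DecidableEq α] {S : Finset α} {a : α → ℕ} {L r : ℕ}
    (h : ∀ j ∈ Icc 1 r, ∀ v, ∀ 𝒜 ⊆ blocks S a j v,
      (𝒜 : Set (Finset α)).PairwiseDisjoint id → #𝒜 * j ≤ L) :
    ∀ j ≤ r, ∀ v, #(blocks S a j v) ≤ L ^ j := by
  intro j
  induction j with
  | zero =>
    intro _ v
    calc #(blocks S a 0 v) ≤ #(S.powersetCard 0) := card_filter_le _ _
      _ = L ^ 0 := by simp
  | succ j ih =>
    intro hj v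
    set F := blocks S a (j + 1) v
    obtain ⟨𝒜, h𝒜F, h𝒜, hmax⟩ := exists_pairwiseDisjoint_subset_maximal F
    set U := 𝒜.biUnion id
    have hU : #U ≤ L := calc
      #U ≤ ∑ A ∈ 𝒜, #A := card_biUnion_le
      _ = #𝒜 * (j + 1) := sum_const_nat fun A hA => (mem_blocks.1 (h𝒜F hA)).1.2
      _ ≤ L := h (j + 1) (mem_Icc.2 ⟨by omega, hj⟩) v 𝒜 h𝒜F h𝒜
    have hcover : F ⊆ U.biUnion fun i => {A ∈ F | i ∈ A} := by
      intro B hB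
      have hne : B.Nonempty := by
        rw [← card_pos, (mem_blocks.1 hB).1.2]; omega
      obtain ⟨i, hiB, hiU⟩ := not_disjoint_iff.1 (hmax B hB hne)
      exact mem_biUnion.2 ⟨i, hiU, mem_filter.2 ⟨hB, hiB⟩⟩
    calc #F ≤ ∑ i ∈ U, #{A ∈ F | i ∈ A} := (card_le_card hcover).trans card_biUnion_le
      _ ≤ ∑ i ∈ U, L ^ j := sum_le_sum fun i _ =>
        (card_filter_mem_blocks_succ_le S a j v i).trans (ih (by omega) _)
      _ = #U * L ^ j := by rw [sum_const, smul_eq_mul]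
      _ ≤ L ^ (j + 1) := by rw [pow_succ']; exact Nat.mul_le_mul_right _ hU

theorem choose_card_le_of_card_blocks_le {S : Finset α} {a : α → ℕ} {x r B : ℕ}
    (hS : ∀ i ∈ S, x ≤ a i ∧ a i < 2 * x) (hr : 0 < r) (hB : ∀ v, #(blocks S a r v) ≤ B) :
    (#S).choose r ≤ r * x * B := by
  have hmaps : ∀ A ∈ S.powersetCard r, ∑ i ∈ A, a i ∈ Ico (r * x) (2 * (r * x)) := by
    intro A hA
    obtain ⟨hAS, hAcard⟩ := mem_powersetCard.1 hA
    have hne : A.Nonempty := by rw [← card_pos, hAcard]; exact hr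
    refine mem_Ico.2 ⟨?_, ?_⟩
    · simpa [hAcard] using card_nsmul_le_sum A a x fun i hi => (hS i (hAS hi)).1
    · simpa [hAcard, mul_left_comm] using
        sum_lt_sum_of_nonempty hne fun i hi => (hS i (hAS hi)).2
  calc (#S).choose r = #(S.powersetCard r) := (card_powersetCard _ _).symm
    _ = ∑ v ∈ Ico (r * x) (2 * (r * x)), #(blocks S a r v) := card_eq_sum_card_fiberwise hmaps
    _ ≤ ∑ v ∈ Ico (r * x) (2 * (r * x)), B := sum_le_sum fun v _ => hB v
    _ = r * x * B := by rw [sum_const, Nat.card_Ico, smul_eq_mul]; congr 1; omega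

theorem exists_packing_lt_card_mul [DecidableEq α] {S : Finset α} {a : α → ℕ} {x r L : ℕ}
    (hS : ∀ i ∈ S, x ≤ a i ∧ a i < 2 * x) (hr : 0 < r) (hrx : r * x < 4 ^ r)
    (hL : 4 * r * (L + 1) + r ≤ #S) :
    ∃ j ∈ Icc 1 r, ∃ v, ∃ 𝒜 ⊆ blocks S a j v,
      (𝒜 : Set (Finset α)).PairwiseDisjoint id ∧ L < #𝒜 * j := by
  by_contra! h
  have hchoose := choose_card_le_of_card_blocks_le hS hr (card_blocks_le_pow h r le_rfl)
  have hlow : (#S + 1 - r) ^ r ≤ r ^ r * (#S).choose r := calc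
    (#S + 1 - r) ^ r ≤ (#S).descFactorial r := Nat.pow_sub_le_descFactorial _ _
    _ = r.factorial * (#S).choose r := Nat.descFactorial_eq_factorial_mul_choose _ _
    _ ≤ r ^ r * (#S).choose r := Nat.mul_le_mul_right _ (Nat.factorial_le_pow r)
  have hfew : r * x * L ^ r < 4 ^ r * (L + 1) ^ r :=
    (Nat.mul_le_mul_left _ (Nat.pow_le_pow_left L.le_succ r)).trans_lt
      (Nat.mul_lt_mul_of_pos_right hrx (by positivity))
  have := calc
    (4 * r * (L + 1)) ^ r ≤ (#S + 1 - r) ^ r := Nat.pow_le_pow_left (by omega) r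
    _ ≤ r ^ r * (#S).choose r := hlow
    _ ≤ r ^ r * (r * x * L ^ r) := Nat.mul_le_mul_left _ hchoose
    _ < r ^ r * (4 ^ r * (L + 1) ^ r) := Nat.mul_lt_mul_of_pos_left hfew (by positivity)
    _ = (4 * r * (L + 1)) ^ r := by rw [mul_pow, mul_pow]; ring
  exact lt_irrefl _ this

theorem exists_heavy_dyadic_class [Fintype ι] (a : ι → ℕ) (ha : ∀ i, 0 < a i) :
    ∃ t ≤ Nat.log 2 (∑ i, a i), ∃ S : Finset ι, (∀ i ∈ S, 2 ^ t ≤ a i ∧ a i < 2 * 2 ^ t) ∧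
      ∑ i, a i ≤ (Nat.log 2 (∑ i, a i) + 1) * ∑ i ∈ S, a i := by
  set ℓ := Nat.log 2 (∑ i, a i)
  have hmaps : ∀ i ∈ (univ : Finset ι), Nat.log 2 (a i) ∈ range (ℓ + 1) := fun i _ =>
    mem_range.2 (Nat.lt_succ_of_le (Nat.log_mono_right (single_le_sum (by simp) (mem_univ i))))
  obtain ⟨t, ht, hmax⟩ := exists_max_image (range (ℓ + 1))
    (fun t => ∑ i with Nat.log 2 (a i) = t, a i) ⟨0, by simp⟩
  refine ⟨t, Nat.lt_succ_iff.1 (mem_range.1 ht), ({i | Nat.log 2 (a i) = t} : Finset ι),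
    fun i hi => ?_, ?_⟩
  · obtain rfl := (mem_filter.1 hi).2
    exact ⟨Nat.pow_log_le_self 2 (ha i).ne', by
      rw [← pow_succ']; exact Nat.lt_pow_succ_log_self one_lt_two _⟩
  · calc ∑ i, a i = ∑ t ∈ range (ℓ + 1), ∑ i with Nat.log 2 (a i) = t, a i :=
          (sum_fiberwise_of_maps_to hmaps a).symm
      _ ≤ #(range (ℓ + 1)) • ∑ i with Nat.log 2 (a i) = t, a i := sum_le_card_nsmul _ _ _ hmax
      _ = _ := by rw [card_range, smul_eq_mul]

theorem le_of_lt_four_mul_div_add {m ℓ r x s : ℕ} (hm : m ≤ (ℓ + 1) * (2 * x * s))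
    (hr : 16 * (ℓ + 1) ≤ r ^ 2) (hs : s < 4 * r * (m / (r ^ 3 * x) + 1) + r) :
    m ≤ 20 * (ℓ + 1) * (r * x) := by
  set q := m / (r ^ 3 * x)
  have hq : r ^ 3 * x * q ≤ m := Nat.mul_div_le m _
  have hs' : s ≤ 4 * r * q + 5 * r := by
    have : 4 * r * (q + 1) = 4 * r * q + 4 * r := by ring
    omega
  have h1 : r ^ 2 * m ≤ 8 * (ℓ + 1) * (r ^ 3 * x * q) + r ^ 2 * (10 * (ℓ + 1) * (r * x)) := calc
    r ^ 2 * m ≤ r ^ 2 * ((ℓ + 1) * (2 * x * (4 * r * q + 5 * r))) := by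
      gcongr; exact hm.trans (by gcongr)
    _ = _ := by ring
  have h2 : 8 * (ℓ + 1) * (r ^ 3 * x * q) ≤ 8 * (ℓ + 1) * m := by gcongr
  have h3 : 16 * (ℓ + 1) * m ≤ r ^ 2 * m := by gcongr
  refine Nat.le_of_mul_le_mul_left ?_ (show 0 < r ^ 2 by omega)
  linarith

theorem exists_block_of_small_class {S : Finset α} {a : α → ℕ} {x r m ℓ : ℕ}
    (hS : ∀ i ∈ S, x ≤ a i) (hS0 : S.Nonempty) (hr : 0 < r)
    (hheavy : m ≤ (ℓ + 1) * ∑ i ∈ S, a i) (hmx : m ≤ 20 * (ℓ + 1) * (r * x)) :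
    ∃ j ∈ Icc 1 r, ∃ v, ∃ A, A ∈ blocks S a j v ∧ m ≤ v * (20 * (ℓ + 1) + r ^ 3) := by
  rcases le_or_gt #S r with hSr | hSr
  · refine ⟨#S, mem_Icc.2 ⟨hS0.card_pos, hSr⟩, _, S, mem_blocks.2 ⟨⟨subset_rfl, rfl⟩, rfl⟩, ?_⟩
    calc m ≤ (∑ i ∈ S, a i) * (ℓ + 1) := by rw [mul_comm]; exact hheavy
      _ ≤ _ := Nat.mul_le_mul_left _ (by omega)
  · obtain ⟨A, hAS, hA⟩ := exists_subset_card_eq hSr.le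
    have hxA : r * x ≤ ∑ i ∈ A, a i := by
      simpa [hA] using card_nsmul_le_sum A a x fun i hi => hS i (hAS hi)
    refine ⟨r, mem_Icc.2 ⟨hr, le_rfl⟩, _, A, mem_blocks.2 ⟨⟨hAS, hA⟩, rfl⟩, ?_⟩
    calc m ≤ (∑ i ∈ A, a i) * (20 * (ℓ + 1)) := by rw [mul_comm]; exact hmx.trans (by gcongr)
      _ ≤ _ := Nat.mul_le_mul_left _ (by omega)

theorem exists_packing_of_large_class [DecidableEq α] {S : Finset α} {a : α → ℕ} {x r m : ℕ}
    (hS : ∀ i ∈ S, x ≤ a i ∧ a i < 2 * x) (hx : 0 < x) (hr : 0 < r) (hrx : r * x < 4 ^ r)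
    (hlarge : 4 * r * (m / (r ^ 3 * x) + 1) + r ≤ #S) :
    ∃ j ∈ Icc 1 r, ∃ v, ∃ 𝒜 ⊆ blocks S a j v,
      (𝒜 : Set (Finset α)).PairwiseDisjoint id ∧ m ≤ #𝒜 * v * r ^ 3 := by
  obtain ⟨j, hj, v, 𝒜, h𝒜, hdisj, hL⟩ := exists_packing_lt_card_mul hS hr hrx hlarge
  refine ⟨j, hj, v, 𝒜, h𝒜, hdisj, ?_⟩
  obtain ⟨A, hA⟩ : 𝒜.Nonempty :=
    card_pos.1 (Nat.pos_of_mul_pos_right (hL.trans_le' (Nat.zero_le _)))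
  obtain ⟨⟨hAS, hAj⟩, hAv⟩ := mem_blocks.1 (h𝒜 hA)
  have hjx : j * x ≤ v := by
    simpa [hAj, hAv] using card_nsmul_le_sum A a x fun i hi => (hS i (hAS hi)).1
  calc m ≤ (m / (r ^ 3 * x) + 1) * (r ^ 3 * x) :=
        (Nat.lt_mul_of_div_lt (Nat.lt_succ_self _) (by positivity)).le
    _ ≤ #𝒜 * j * (r ^ 3 * x) := Nat.mul_le_mul_right _ hL
    _ = #𝒜 * (j * x) * r ^ 3 := by ring
    _ ≤ #𝒜 * v * r ^ 3 := by gcongr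

theorem exists_packing_mul_le [Fintype ι] [DecidableEq ι] (a : ι → ℕ) (ha : ∀ i, 0 < a i)
    (hm : 0 < ∑ i, a i) {r : ℕ} (hr : 16 * (Nat.log 2 (∑ i, a i) + 1) ≤ r ^ 2)
    (hrx : r * 2 ^ Nat.log 2 (∑ i, a i) < 4 ^ r) :
    ∃ j ∈ Icc 1 r, ∃ v, ∃ 𝒜 ⊆ blocks univ a j v, (𝒜 : Set (Finset ι)).PairwiseDisjoint id ∧
      ∑ i, a i ≤ #𝒜 * v * (20 * (Nat.log 2 (∑ i, a i) + 1) + r ^ 3) := by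
  obtain ⟨t, htℓ, S, hS, hheavy⟩ := exists_heavy_dyadic_class a ha
  set m := ∑ i, a i
  have hr0 : 0 < r := by nlinarith
  have hS0 : S.Nonempty := by
    by_contra! h
    rw [h, sum_empty, mul_zero] at hheavy
    omega
  have hw : ∑ i ∈ S, a i ≤ 2 * 2 ^ t * #S := by
    simpa [mul_comm] using sum_le_card_nsmul S a _ fun i hi => (hS i hi).2.le
  by_cases hsmall : #S < 4 * r * (m / (r ^ 3 * 2 ^ t) + 1) + r
  · obtain ⟨j, hj, v, A, hA, hv⟩ := exists_block_of_small_class (fun i hi => (hS i hi).1) hS0 hr0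
      hheavy (le_of_lt_four_mul_div_add (hheavy.trans (by gcongr)) hr hsmall)
    refine ⟨j, hj, v, {A}, by simpa using blocks_mono (subset_univ S) a j v hA, by simp, ?_⟩
    simpa using hv
  · have hrx' : r * 2 ^ t < 4 ^ r :=
      (Nat.mul_le_mul_left r (Nat.pow_le_pow_right two_pos htℓ)).trans_lt hrx
    obtain ⟨j, hj, v, 𝒜, h𝒜, hdisj, hmv⟩ := exists_packing_of_large_class hS (by positivity) hr0
      hrx' (not_lt.1 hsmall)
    exact ⟨j, hj, v, 𝒜, h𝒜.trans (blocks_mono (subset_univ S) a j v), hdisj,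
      hmv.trans (by gcongr; omega)⟩

theorem three_mul_add_four_lt_two_pow {c : ℕ} (hc : 9 ≤ c) : 3 * c + 4 < 2 ^ c := by
  induction c, hc using Nat.le_induction with
  | base => norm_num
  | succ c _ ih => rw [pow_succ]; omega

theorem sixteen_mul_succ_le_sq {ℓ : ℕ} (hℓ : 100 ≤ ℓ) : 16 * (ℓ + 1) ≤ (2 * ℓ / 3) ^ 2 := by
  have h1 : 60 ≤ 2 * ℓ / 3 := by omega
  have h2 : 2 * ℓ ≤ 3 * (2 * ℓ / 3) + 2 := by omega
  nlinarith

theorem mul_two_pow_lt_four_pow {ℓ : ℕ} (hℓ : 100 ≤ ℓ) :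
    2 * ℓ / 3 * 2 ^ ℓ < 4 ^ (2 * ℓ / 3) := by
  set r := 2 * ℓ / 3
  calc r * 2 ^ ℓ < 2 ^ (2 * r - ℓ) * 2 ^ ℓ :=
        Nat.mul_lt_mul_of_pos_right ((show r ≤ 3 * (2 * r - ℓ) + 4 by omega).trans_lt
          (three_mul_add_four_lt_two_pow (by omega))) (by positivity)
    _ = 4 ^ r := by rw [← pow_add, show 2 * r - ℓ + ℓ = 2 * r by omega, pow_mul]; norm_num

theorem mul_log_two_le_log (m : ℕ) : (Nat.log 2 m : ℝ) * Real.log 2 ≤ Real.log m := by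
  have h := Real.natLog_le_logb m 2
  rwa [Real.logb, le_div_iff₀ (by positivity)] at h

theorem cast_two_mul_log_div_three_le_log (m : ℕ) :
    ((2 * Nat.log 2 m / 3 : ℕ) : ℝ) ≤ Real.log m := by
  have h : ((2 * Nat.log 2 m / 3 : ℕ) : ℝ) * 3 ≤ 2 * Nat.log 2 m := by
    exact_mod_cast Nat.div_mul_le_self _ 3
  nlinarith [Real.log_two_gt_d9, mul_log_two_le_log m,
    (Nat.cast_nonneg _ : (0 : ℝ) ≤ Nat.log 2 m)]

theorem cast_add_pow_three_le {ℓ : ℕ} (hℓ : 100 ≤ ℓ) :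
    ((20 * (ℓ + 1) + (2 * ℓ / 3) ^ 3 : ℕ) : ℝ) ≤ (ℓ * Real.log 2) ^ 3 := by
  have hr : ((2 * ℓ / 3 : ℕ) : ℝ) * 3 ≤ 2 * ℓ := by exact_mod_cast Nat.div_mul_le_self (2 * ℓ) 3
  have hℓ' : (100 : ℝ) ≤ ℓ := by exact_mod_cast hℓ
  have h1 : ((2 * ℓ / 3 : ℕ) : ℝ) ^ 3 ≤ (2 * ℓ / 3) ^ 3 :=
    pow_le_pow_left₀ (Nat.cast_nonneg _) (by linarith) 3
  have h2 : (0.69 * ℓ : ℝ) ^ 3 ≤ (ℓ * Real.log 2) ^ 3 :=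
    pow_le_pow_left₀ (by positivity) (by nlinarith [Real.log_two_gt_d9]) 3
  have h3 : 10000 * (ℓ : ℝ) ≤ ℓ ^ 3 := by
    have hsq : (10000 : ℝ) ≤ ℓ ^ 2 := by nlinarith
    nlinarith
  push_cast
  linarith

theorem cast_div_log_pow_three_le {m K : ℕ} (hm : 2 ^ 100 ≤ m)
    (h : m ≤ K * (20 * (Nat.log 2 m + 1) + (2 * Nat.log 2 m / 3) ^ 3)) :
    (m : ℝ) / Real.log m ^ 3 ≤ K := by
  have hlog : 0 < Real.log m := Real.log_pos (by exact_mod_cast (by omega : 1 < m))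
  have hC := (cast_add_pow_three_le (Nat.le_log_of_pow_le one_lt_two hm)).trans
    (pow_le_pow_left₀ (by positivity) (mul_log_two_le_log m) 3)
  rw [div_le_iff₀ (by positivity)]
  calc (m : ℝ) ≤ K * ((20 * (Nat.log 2 m + 1) + (2 * Nat.log 2 m / 3) ^ 3 : ℕ) : ℝ) := by
        exact_mod_cast h
    _ ≤ K * Real.log m ^ 3 := by gcongr

/-- The partitioning lemma: for `m = ∑ a i` sufficiently large, there are `k` pairwise
disjoint `r`-sets, each of weight `d`, with `r ≤ log m` and `k d ≥ m/(log m)^3`. -/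
theorem stmt12 : ∃ N : ℕ, ∀ (n : ℕ) (a : Fin n → ℕ), (∀ i, 0 < a i) → N ≤ ∑ i, a i →
    ∃ (k r d : ℕ) (I : Fin k → Finset (Fin n)), 0 < k ∧ 0 < d ∧
      (1 ≤ r ∧ (r : ℝ) ≤ Real.log (∑ i, a i : ℕ)) ∧
      ((∑ i, a i : ℕ) / (Real.log (∑ i, a i : ℕ)) ^ 3 ≤ ((k * d : ℕ) : ℝ)) ∧
      (∀ j, (I j).card = r ∧ ∑ i ∈ I j, a i = d) ∧
      (∀ j j', j ≠ j' → Disjoint (I j) (I j')) := by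
  refine ⟨2 ^ 100, fun n a ha hN => ?_⟩
  have hℓ : 100 ≤ Nat.log 2 (∑ i, a i) := Nat.le_log_of_pow_le one_lt_two hN
  obtain ⟨j, hj, v, 𝒜, h𝒜, hdisj, hbound⟩ := exists_packing_mul_le a ha
    ((Nat.two_pow_pos 100).trans_le hN) (sixteen_mul_succ_le_sq hℓ) (mul_two_pow_lt_four_pow hℓ)
  have hkv : 0 < #𝒜 * v := Nat.pos_of_ne_zero fun h => by
    rw [h, zero_mul] at hbound
    omega
  have hI : ∀ i, (𝒜.equivFin.symm i : Finset (Fin n)) ∈ blocks univ a j v :=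
    fun i => h𝒜 (𝒜.equivFin.symm i).2
  refine ⟨#𝒜, j, v, fun i => 𝒜.equivFin.symm i, Nat.pos_of_mul_pos_right hkv,
    Nat.pos_of_mul_pos_left hkv,
    ⟨(mem_Icc.1 hj).1,
      (Nat.cast_le.2 (mem_Icc.1 hj).2).trans (cast_two_mul_log_div_three_le_log _)⟩,
    cast_div_log_pow_three_le hN hbound,
    fun i => ⟨(mem_blocks.1 (hI i)).1.2, (mem_blocks.1 (hI i)).2⟩, fun i i' hii' => ?_⟩
  exact hdisj (coe_mem _) (coe_mem _) fun h => hii' (𝒜.equivFin.symm.injective (Subtype.ext h))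
end

section
/- Every graph G with m ≥ 1 edges satisfies |M(G)| = Ω(m^{1/2}); more precisely, the set of sizes of induced subgraphs of G contains at least c·m^{1/2} distinct elements for some absolute constant c > 0. -/
/-!
Enumerate the vertices starting with a vertex `v` of maximum degree `Δ`, and follow the number of
edges induced by the growing prefixes. It climbs from `0` to `m` in steps of at most `Δ`, so it
has at least `m / Δ` ascents; and it ascends whenever a neighbour of `v` joins, so it has at least
`Δ` ascents. The number `J` of ascents therefore satisfies `m ≤ Δ J ≤ J²`, while the `J + 1`
values reached at ascents (and at the start) are distinct induced edge counts.
-/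

open Finset

def ascents (g : ℕ → ℕ) (n : ℕ) : Finset ℕ := {k ∈ range n | g k < g (k + 1)}

theorem ascents_succ (g : ℕ → ℕ) (n : ℕ) :
    ascents g (n + 1) = if g n < g (n + 1) then insert n (ascents g n) else ascents g n := by
  rw [ascents, range_add_one, filter_insert, ascents]

theorem self_notMem_ascents (g : ℕ → ℕ) (n : ℕ) : n ∉ ascents g n := by
  simp [ascents]

theorem card_ascents_add_one_le_card_image {g : ℕ → ℕ} (hg : Monotone g) (n : ℕ) :
    #(ascents g n) + 1 ≤ #((range (n + 1)).image g) := by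
  induction n with
  | zero => simp [ascents]
  | succ n ih =>
    rw [range_add_one (n := n + 1), image_insert, ascents_succ]
    split_ifs with hn
    · have hnew : g (n + 1) ∉ (range (n + 1)).image g := by
        simp only [mem_image, mem_range, not_exists, not_and]
        exact fun k hk hgk => (hg (Nat.lt_succ_iff.mp hk)).not_gt (hgk ▸ hn)
      rw [card_insert_of_notMem hnew, card_insert_of_notMem (self_notMem_ascents g n)]
      exact Nat.add_le_add_right ih 1
    · exact ih.trans (card_le_card (subset_insert _ _))

theorem le_add_mul_card_ascents {g : ℕ → ℕ} {D : ℕ} (hD : ∀ k, g (k + 1) ≤ g k + D)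
    (n : ℕ) : g n ≤ g 0 + D * #(ascents g n) := by
  induction n with
  | zero => simp
  | succ n ih =>
    rw [ascents_succ]
    split_ifs with hn
    · rw [card_insert_of_notMem (self_notMem_ascents g n)]
      calc g (n + 1) ≤ g n + D := hD n
        _ ≤ g 0 + D * #(ascents g n) + D := Nat.add_le_add_right ih D
        _ = _ := by ring
    · exact (Nat.le_of_not_lt hn).trans ih

def rootedPrefix {V : Type*} [DecidableEq V] [Fintype V] {n : ℕ} (e : V ≃ Fin n) (v : V)
    (k : ℕ) : Finset V :=
  insert v ({w | (e w : ℕ) < k} : Finset V)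

theorem card_filter_eq_le_one_of_injective {α β : Type*} [Fintype α] [DecidableEq β]
    {f : α → β} (hf : Function.Injective f) (b : β) : #({a | f a = b} : Finset α) ≤ 1 :=
  card_le_one.mpr fun a₁ h₁ a₂ h₂ => by
    simp only [mem_filter, mem_univ, true_and] at h₁ h₂
    exact hf (h₁.trans h₂.symm)

section rootedPrefix

variable {V : Type*} [DecidableEq V] [Fintype V] {n : ℕ} (e : V ≃ Fin n) (v : V)

theorem rootedPrefix_mono : Monotone (rootedPrefix e v) := fun _ _ hkl =>
  insert_subset_insert v <| monotone_filter_right _ fun _ _ hw => hw.trans_le hkl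

theorem rootedPrefix_zero : rootedPrefix e v 0 = {v} := by
  simp [rootedPrefix]

theorem rootedPrefix_self : rootedPrefix e v n = univ := by
  simp [rootedPrefix]

theorem rootedPrefix_succ (k : ℕ) :
    rootedPrefix e v (k + 1) = rootedPrefix e v k ∪ ({w | (e w : ℕ) = k} : Finset V) := by
  ext w
  simp only [rootedPrefix, mem_union, mem_insert, mem_filter, mem_univ, true_and,
    Nat.lt_succ_iff_lt_or_eq, or_assoc]

end rootedPrefix

namespace SimpleGraph

variable {V : Type*} [Fintype V] [DecidableEq V] (G : SimpleGraph V) [DecidableRel G.Adj]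

def inducedEdgeCount (U : Finset V) : ℕ :=
  (G.edgeFinset.filter (fun e => ∀ v ∈ e, v ∈ U)).card

theorem inducedEdgeCount_mono : Monotone G.inducedEdgeCount :=
  fun _ _ hUW => card_le_card <| monotone_filter_right _ fun _ _ he v hv => hUW (he v hv)

theorem inducedEdgeCount_singleton (v : V) : G.inducedEdgeCount {v} = 0 := by
  rw [inducedEdgeCount, card_eq_zero, filter_eq_empty_iff]
  intro e he
  induction e using Sym2.ind with
  | _ a b =>
    simp only [mem_edgeFinset, mem_edgeSet] at he
    simp only [Sym2.mem_iff, mem_singleton, forall_eq_or_imp, forall_eq, not_and]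
    exact fun ha hb => G.ne_of_adj he (ha.trans hb.symm)

theorem inducedEdgeCount_univ : G.inducedEdgeCount univ = #G.edgeFinset := by
  simp [inducedEdgeCount]

theorem inducedEdgeCount_union_le (U W : Finset V) :
    G.inducedEdgeCount (U ∪ W) ≤ G.inducedEdgeCount U + ∑ w ∈ W, G.degree w := by
  have hsub : G.edgeFinset.filter (fun e => ∀ v ∈ e, v ∈ U ∪ W) ⊆
      G.edgeFinset.filter (fun e => ∀ v ∈ e, v ∈ U) ∪
        W.biUnion (fun w => G.incidenceFinset w) := by
    intro e he
    simp only [mem_filter, mem_union, mem_biUnion] at he ⊢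
    by_cases hU : ∀ v ∈ e, v ∈ U
    · exact Or.inl ⟨he.1, hU⟩
    · push Not at hU
      obtain ⟨w, hwe, hwU⟩ := hU
      exact Or.inr ⟨w, (he.2 w hwe).resolve_left hwU,
        (G.mem_incidenceFinset w e).mpr ⟨mem_edgeFinset.mp he.1, hwe⟩⟩
  calc G.inducedEdgeCount (U ∪ W)
      ≤ G.inducedEdgeCount U + #(W.biUnion (fun w => G.incidenceFinset w)) :=
        (card_le_card hsub).trans (card_union_le _ _)
    _ ≤ G.inducedEdgeCount U + ∑ w ∈ W, G.degree w := by
        gcongr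
        exact card_biUnion_le.trans_eq
          (sum_congr rfl fun w _ => G.card_incidenceFinset_eq_degree w)

theorem inducedEdgeCount_lt_of_adj {U W : Finset V} {a b : V} (hUW : U ⊆ W) (hab : G.Adj a b)
    (ha : a ∈ W) (hb : b ∈ W) (hbU : b ∉ U) :
    G.inducedEdgeCount U < G.inducedEdgeCount W := by
  refine card_lt_card <| (ssubset_iff_of_subset ?_).mpr ⟨s(a, b), ?_, ?_⟩
  · exact monotone_filter_right _ fun _ _ he v hv => hUW (he v hv)
  · simpa [mem_filter, hab] using ⟨ha, hb⟩
  · simp only [mem_filter, not_and, not_forall]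
    exact fun _ => ⟨b, Sym2.mem_mk_right a b, hbU⟩

section rootedPrefix

variable {n : ℕ} (e : V ≃ Fin n) (v : V)

theorem inducedEdgeCount_rootedPrefix_succ_le (k : ℕ) :
    G.inducedEdgeCount (rootedPrefix e v (k + 1)) ≤
      G.inducedEdgeCount (rootedPrefix e v k) + G.maxDegree := by
  rw [rootedPrefix_succ]
  refine (G.inducedEdgeCount_union_le _ _).trans (Nat.add_le_add_left ?_ _)
  calc ∑ w ∈ {w | (e w : ℕ) = k}, G.degree w
      ≤ #({w | (e w : ℕ) = k} : Finset V) * G.maxDegree :=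
        sum_le_card_nsmul _ _ _ fun w _ => G.degree_le_maxDegree w
    _ ≤ G.maxDegree := by
        simpa using Nat.mul_le_mul_right G.maxDegree
          (card_filter_eq_le_one_of_injective (Fin.val_injective.comp e.injective) k)

theorem degree_le_card_ascents_inducedEdgeCount_rootedPrefix :
    G.degree v ≤ #(ascents (fun k => G.inducedEdgeCount (rootedPrefix e v k)) n) := by
  rw [← card_neighborFinset_eq_degree,
    ← card_image_of_injective _ (Fin.val_injective.comp e.injective)]
  refine card_le_card fun k hk => ?_
  obtain ⟨w, hw, rfl⟩ := mem_image.mp hk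
  have hvw := (G.mem_neighborFinset v w).mp hw
  simp only [ascents, mem_filter, mem_range, Function.comp_apply, Fin.is_lt, true_and]
  refine G.inducedEdgeCount_lt_of_adj (rootedPrefix_mono e v (Nat.le_succ _)) hvw
    (mem_insert_self _ _) ?_ ?_
  · simp [rootedPrefix]
  · simp [rootedPrefix, hvw.ne']

end rootedPrefix

theorem card_edgeFinset_lt_sq_card_image_inducedEdgeCount [Nonempty V] :
    #G.edgeFinset < #(univ.powerset.image G.inducedEdgeCount) ^ 2 := by
  obtain ⟨v, hv⟩ := G.exists_maximal_degree_vertex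
  let e := Fintype.equivFin V
  set g := fun k => G.inducedEdgeCount (rootedPrefix e v k)
  set J := #(ascents g (Fintype.card V))
  have hedges : #G.edgeFinset ≤ G.maxDegree * J := by
    simpa [g, rootedPrefix_zero, rootedPrefix_self, inducedEdgeCount_singleton,
      inducedEdgeCount_univ] using
      le_add_mul_card_ascents (g := g) (G.inducedEdgeCount_rootedPrefix_succ_le e v)
        (Fintype.card V)
  have hdeg : G.maxDegree ≤ J := hv ▸ G.degree_le_card_ascents_inducedEdgeCount_rootedPrefix e v
  have hvalues : J + 1 ≤ #(univ.powerset.image G.inducedEdgeCount) :=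
    (card_ascents_add_one_le_card_image
      (G.inducedEdgeCount_mono.comp (rootedPrefix_mono e v)) _).trans <|
      card_le_card fun _ hx => by
        obtain ⟨k, -, rfl⟩ := mem_image.mp hx
        exact mem_image_of_mem _ (mem_powerset.mpr (subset_univ _))
  calc #G.edgeFinset ≤ G.maxDegree * J := hedges
    _ ≤ J * J := Nat.mul_le_mul_right J hdeg
    _ < (J + 1) ^ 2 := by nlinarith
    _ ≤ #(univ.powerset.image G.inducedEdgeCount) ^ 2 := Nat.pow_le_pow_left hvalues 2

end SimpleGraph

/-- Every graph with `m ≥ 1` edges has at least `c √m` distinct induced subgraph sizes. -/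
theorem stmt15 : ∃ c : ℝ, 0 < c ∧
    ∀ (V : Type) [Fintype V] [DecidableEq V] (G : SimpleGraph V) [DecidableRel G.Adj]
      (m : ℕ), G.edgeFinset.card = m → 1 ≤ m →
      c * Real.sqrt m ≤
        ((Finset.univ.powerset.image (fun U : Finset V =>
          (G.edgeFinset.filter (fun e => ∀ v ∈ e, v ∈ U)).card)).card : ℝ) := by
  refine ⟨1, one_pos, fun V _ _ G _ m hm hm1 => ?_⟩
  have : Nonempty V := by
    obtain ⟨e, -⟩ := card_pos.mp (hm ▸ hm1 : 0 < #G.edgeFinset)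
    exact ⟨e.out.1⟩
  rw [one_mul, ← hm, Real.sqrt_le_left (Nat.cast_nonneg _)]
  exact_mod_cast (G.card_edgeFinset_lt_sq_card_image_inducedEdgeCount).le
end

section
/- Let H be a bipartite multigraph with parts X_H and Y_H such that every vertex of X_H has degree exactly d. Suppose y ∈ Y_H and 0 ≤ a < b are integers such that the set Γ_a(y) of vertices of X_H joined to y by exactly a parallel edges and the set Γ_b(y) of vertices joined to y by exactly b parallel edges both have size at least s. Then M(H) contains the set {(d−a)x + (d−b)y' : 0 ≤ x ≤ s, 0 ≤ y' ≤ s}, and hence |M(H)| ≥ s · min((d−a)/(b−a), s). -/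
/-!
Deleting `y₀` from `Y` turns every `x ∈ X` joined to `y₀` by `c` edges into a vertex of
degree `d - c` into the rest of `Y`, so choosing `u` vertices of `Γ_a(y₀)` and `v` of
`Γ_b(y₀)` realizes `(d - a)u + (d - b)v`. With `g = gcd(d - a, d - b)`, these values are
pairwise distinct for `v < (d - a)/g`, since `(d - b)v ≡ (d - b)v' (mod d - a)` forces
`v ≡ v' (mod (d - a)/g)`; and `g ∣ b - a` gives `(d - a)/g ≥ (d - a)/(b - a)`.
-/

open Finset

/-- `M(H)` for the bipartite multigraph `H` with edge multiplicities `w`. -/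
def edgeCounts {X Y : Type*} [Fintype X] [Fintype Y] (w : X → Y → ℕ) : Finset ℕ :=
  (univ.powerset ×ˢ univ.powerset).image
    (fun p : Finset X × Finset Y => ∑ x ∈ p.1, ∑ y ∈ p.2, w x y)

theorem mem_edgeCounts {X Y : Type*} [Fintype X] [Fintype Y] {w : X → Y → ℕ} {n : ℕ} :
    n ∈ edgeCounts w ↔ ∃ (A : Finset X) (B : Finset Y), ∑ x ∈ A, ∑ y ∈ B, w x y = n := by
  simp [edgeCounts]

section Regular

variable {X Y : Type*} [Fintype Y] {w : X → Y → ℕ} {d : ℕ}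

theorem weight_le_of_sum_eq (hdeg : ∀ x, ∑ y, w x y = d) (x : X) (y : Y) : w x y ≤ d :=
  hdeg x ▸ single_le_sum (fun _ _ => Nat.zero_le _) (mem_univ y)

theorem sum_erase_eq_sub [DecidableEq Y] (hdeg : ∀ x, ∑ y, w x y = d) (x : X) (y₀ : Y) :
    ∑ y ∈ univ.erase y₀, w x y = d - w x y₀ := by
  rw [← hdeg x, ← add_sum_erase _ _ (mem_univ y₀), Nat.add_sub_cancel_left]

theorem sum_sum_erase_of_subset_filter [Fintype X] [DecidableEq Y] (hdeg : ∀ x, ∑ y, w x y = d) {y₀ : Y}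
    {c : ℕ} {A : Finset X} (hA : A ⊆ univ.filter (fun x => w x y₀ = c)) :
    ∑ x ∈ A, ∑ y ∈ univ.erase y₀, w x y = (d - c) * #A := by
  rw [sum_congr rfl fun x hx => by rw [sum_erase_eq_sub hdeg, (mem_filter.1 (hA hx)).2],
    sum_const, smul_eq_mul, mul_comm]

theorem exists_sum_sum_eq [Fintype X] (hdeg : ∀ x, ∑ y, w x y = d) {y₀ : Y} {a b u v : ℕ}
    (hab : a ≠ b) (hu : u ≤ #(univ.filter (fun x => w x y₀ = a)))
    (hv : v ≤ #(univ.filter (fun x => w x y₀ = b))) :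
    ∃ (A : Finset X) (B : Finset Y), ∑ x ∈ A, ∑ y ∈ B, w x y = (d - a) * u + (d - b) * v := by
  classical
  obtain ⟨A₁, hA₁, rfl⟩ := exists_subset_card_eq hu
  obtain ⟨A₂, hA₂, rfl⟩ := exists_subset_card_eq hv
  have hdisj : Disjoint A₁ A₂ := disjoint_left.2 fun x hx₁ hx₂ =>
    hab <| (mem_filter.1 (hA₁ hx₁)).2.symm.trans (mem_filter.1 (hA₂ hx₂)).2
  refine ⟨A₁ ∪ A₂, univ.erase y₀, ?_⟩
  rw [sum_union hdisj, sum_sum_erase_of_subset_filter hdeg hA₁,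
    sum_sum_erase_of_subset_filter hdeg hA₂]

end Regular

theorem injOn_linear_range_div_gcd {p : ℕ} (hp : 0 < p) (q s : ℕ) :
    Set.InjOn (fun uv : ℕ × ℕ => p * uv.1 + q * uv.2)
      (range s ×ˢ range (p / Nat.gcd p q) : Finset (ℕ × ℕ)) := by
  rintro ⟨u, v⟩ huv ⟨u', v'⟩ huv' heq
  simp only [coe_product, Set.mem_prod, mem_coe, mem_range] at huv huv' heq
  have hmod : q * v ≡ q * v' [MOD p] := by
    simpa [Nat.ModEq, Nat.add_mod] using congrArg (· % p) heq
  have hv : v = v' := (hmod.cancel_left_div_gcd hp).eq_of_lt_of_lt huv.2 huv'.2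
  subst hv
  have hu : u = u' := Nat.eq_of_mul_eq_mul_left hp (Nat.add_right_cancel heq)
  rw [hu]

theorem mul_min_le_card_of_linear_mem {p : ℕ} (hp : 0 < p) {q s : ℕ} {T : Finset ℕ}
    (hT : ∀ u v, u ≤ s → v ≤ s → p * u + q * v ∈ T) :
    (s + 1) * min (p / Nat.gcd p q) (s + 1) ≤ #T := by
  calc (s + 1) * min (p / Nat.gcd p q) (s + 1)
      = #(range (s + 1) ×ˢ range (min (p / Nat.gcd p q) (s + 1))) := by simp
    _ ≤ #T := card_le_card_of_injOn _
        (fun uv huv => by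
          simp only [coe_product, Set.mem_prod, mem_coe, mem_range, lt_min_iff] at huv
          exact hT _ _ (by omega) (by omega))
        ((injOn_linear_range_div_gcd hp q (s + 1)).mono
          (by gcongr; simp))

theorem div_le_natCast_div_of_dvd {p m g : ℕ} (hm : 0 < m) (hgp : g ∣ p) (hgm : g ∣ m) :
    (p : ℝ) / m ≤ (p / g : ℕ) := by
  have hg : 0 < g := Nat.pos_of_dvd_of_pos hgm hm
  rw [Nat.cast_div hgp (by positivity)]
  exact div_le_div_of_nonneg_left (Nat.cast_nonneg p) (by positivity)
    (by exact_mod_cast Nat.le_of_dvd hm hgm)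

theorem mul_min_le_mul_min {r : ℝ} {k s : ℕ} (hr : r ≤ k) :
    (s : ℝ) * min r s ≤ ((s + 1 : ℕ) * min k (s + 1) : ℕ) := by
  push_cast
  calc (s : ℝ) * min r s ≤ s * min (k : ℝ) (s + 1) :=
      mul_le_mul_of_nonneg_left (min_le_min hr (by linarith)) (by positivity)
    _ ≤ (s + 1) * min (k : ℝ) (s + 1) :=
      mul_le_mul_of_nonneg_right (by linarith) (le_min (by positivity) (by positivity))

/-- If every vertex of `X` has degree `d` and some `y₀ ∈ Y` has at least `s` neighbours
of multiplicity `a` and at least `s` of multiplicity `b` (`a < b`), then the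
multiplication table contains all numbers `(d-a)u + (d-b)v` with `u, v ≤ s`, and has
size at least `s · min((d-a)/(b-a), s)`. -/
theorem stmt17 (X Y : Type*) [Fintype X] [Fintype Y] (w : X → Y → ℕ) (d : ℕ)
    (hdeg : ∀ x, ∑ y, w x y = d) (y0 : Y) (a b s : ℕ) (hab : a < b)
    (hsa : s ≤ (Finset.univ.filter (fun x => w x y0 = a)).card)
    (hsb : s ≤ (Finset.univ.filter (fun x => w x y0 = b)).card) :
    (∀ u v : ℕ, u ≤ s → v ≤ s →
      ∃ (A : Finset X) (B : Finset Y),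
        ∑ x ∈ A, ∑ y ∈ B, w x y = (d - a) * u + (d - b) * v) ∧
    (s : ℝ) * min (((d : ℝ) - a) / ((b : ℝ) - a)) (s : ℝ) ≤
      (((Finset.univ.powerset ×ˢ Finset.univ.powerset).image
        (fun p : Finset X × Finset Y => ∑ x ∈ p.1, ∑ y ∈ p.2, w x y)).card : ℝ) := by
  have hsums : ∀ u v : ℕ, u ≤ s → v ≤ s → ∃ (A : Finset X) (B : Finset Y),
      ∑ x ∈ A, ∑ y ∈ B, w x y = (d - a) * u + (d - b) * v := fun u v hu hv =>
    exists_sum_sum_eq hdeg hab.ne (hu.trans hsa) (hv.trans hsb)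
  refine ⟨hsums, ?_⟩
  change _ ≤ (#(edgeCounts w) : ℝ)
  rcases Nat.eq_zero_or_pos s with rfl | hs
  · simp
  obtain ⟨x, hx⟩ := card_pos.1 (hs.trans_le hsb)
  have hbd : b ≤ d := (mem_filter.1 hx).2 ▸ weight_le_of_sum_eq hdeg x y0
  have hcard := mul_min_le_card_of_linear_mem (T := edgeCounts w) (p := d - a) (q := d - b)
    (by omega) fun u v hu hv => mem_edgeCounts.2 (hsums u v hu hv)
  have hgcd : Nat.gcd (d - a) (d - b) ∣ b - a := by
    simpa [show d - a - (d - b) = b - a by omega] using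
      Nat.dvd_sub (Nat.gcd_dvd_left (d - a) (d - b)) (Nat.gcd_dvd_right _ _)
  have hratio := div_le_natCast_div_of_dvd (Nat.sub_pos_of_lt hab) (Nat.gcd_dvd_left _ _) hgcd
  rw [Nat.cast_sub (hab.trans_le hbd).le, Nat.cast_sub hab.le] at hratio
  exact (mul_min_le_mul_min hratio).trans (by exact_mod_cast hcard)
end
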